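/- arXiv:2111.06170 — 9 statements merged into one kernel-verified Lean document; each statement's English description precedes it below -/
import Mathlib

section
/- With the Syracuse map S and the sequences a_i(N), R_i(N) as defined, let N ∈ ℕ \ pℕ and set m = a_1(N) + ... + a_k(N). If M ≡ N (mod p^{m+1}) then a_i(M) = a_i(N) for all i = 1,...,k and R_i(M) = R_i(N) for all i = 1,...,k+1. -/
/-! Write `T(n) = q n + r(n mod p)`, so that `T(n) = p^{a(n)} S(n)` with `p ∤ S(n)`. Since `T`
is affine in `n` with a correction depending only on `n mod p`, a congruence
`n ≡ n' (mod p^{j+1})` carries over to `T(n) ≡ T(n') (mod p^{j+1})`. When `a(n) ≤ j` this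
congruence pins down `a(n') = a(n)`, and cancelling `p^{a(n)}` leaves
`S(n) ≡ S(n') (mod p^{j-a(n)+1})`. Each step of the iteration thus spends `a_i` of the exponent,
and the last remaining factor `p` still fixes the residue class mod `p` of the final iterate. -/

section Valuation

variable {p x y m : ℕ}

theorem padicValNat_eq_of_modEq (hp : p ≠ 1) (hx : x ≠ 0) (hy : y ≠ 0)
    (h : x ≡ y [MOD p ^ (m + 1)]) (hv : padicValNat p x ≤ m) :
    padicValNat p y = padicValNat p x := by
  have dvd_iff : ∀ n ≤ m + 1, p ^ n ∣ x ↔ p ^ n ∣ y := fun n hn =>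
    h.dvd_iff (pow_dvd_pow p hn)
  have hle : padicValNat p x ≤ padicValNat p y := by
    rw [← padicValNat_dvd_iff_le_of_ne_one hp hy, ← dvd_iff _ (by omega)]
    exact pow_padicValNat_dvd
  have hnot : ¬ padicValNat p x + 1 ≤ padicValNat p y := by
    rw [← padicValNat_dvd_iff_le_of_ne_one hp hy, ← dvd_iff _ (by omega),
      padicValNat_dvd_iff_le_of_ne_one hp hx]
    omega
  omega

theorem not_dvd_div_pow_padicValNat (hp : p ≠ 1) (hx : x ≠ 0) :
    ¬ p ∣ x / p ^ padicValNat p x := by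
  intro h
  have : p ^ (padicValNat p x + 1) ∣ p ^ padicValNat p x * (x / p ^ padicValNat p x) := by
    rw [pow_succ]
    exact Nat.mul_dvd_mul_left _ h
  rw [Nat.mul_div_cancel' pow_padicValNat_dvd, padicValNat_dvd_iff_le_of_ne_one hp hx] at this
  omega

theorem div_pow_padicValNat_modEq (hp : p ≠ 0) (h : x ≡ y [MOD p ^ (m + 1)])
    (hv : padicValNat p x ≤ m) (hvy : padicValNat p y = padicValNat p x) :
    x / p ^ padicValNat p x ≡ y / p ^ padicValNat p y [MOD p ^ (m - padicValNat p x + 1)] := by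
  apply Nat.ModEq.mul_left_cancel' (pow_ne_zero (padicValNat p x) hp)
  have hy : p ^ padicValNat p x ∣ y := hvy ▸ pow_padicValNat_dvd
  rw [← pow_add, show padicValNat p x + (m - padicValNat p x + 1) = m + 1 by omega, hvy,
    Nat.mul_div_cancel' pow_padicValNat_dvd, Nat.mul_div_cancel' hy]
  exact h

end Valuation

section Syracuse

variable {p q : ℕ} {r : ℕ → ℤ} {S : ℕ → ℕ} {M N m : ℕ}

def syracuseNumerator (p q : ℕ) (r : ℕ → ℤ) (n : ℕ) : ℕ := ((q * n : ℤ) + r (n % p)).toNat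

theorem mul_add_residue_pos_of_not_dvd (hp : 0 < p)
    (hr : ∀ j, 1 ≤ j → j < p → 1 ≤ q * j + r j) (hN : ¬ p ∣ N) : 0 < ((q * N : ℤ) + r (N % p)) := by
  have hj : 1 ≤ N % p := Nat.pos_of_ne_zero fun h => hN (Nat.dvd_of_mod_eq_zero h)
  have hjp : N % p < p := Nat.mod_lt _ hp
  have hle : (q : ℤ) * (N % p : ℕ) ≤ q * N := by gcongr; exact_mod_cast Nat.mod_le N p
  linarith [hr _ hj hjp]

theorem syracuseNumerator_ne_zero (hp : 0 < p) (hr : ∀ j, 1 ≤ j → j < p → 1 ≤ q * j + r j)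
    (hN : ¬ p ∣ N) : syracuseNumerator p q r N ≠ 0 := by
  simpa [syracuseNumerator] using mul_add_residue_pos_of_not_dvd hp hr hN

theorem syracuseNumerator_modEq (hp : 0 < p) (hr : ∀ j, 1 ≤ j → j < p → 1 ≤ q * j + r j)
    (hN : ¬ p ∣ N) (h : M ≡ N [MOD p ^ (m + 1)]) :
    syracuseNumerator p q r M ≡ syracuseNumerator p q r N [MOD p ^ (m + 1)] := by
  have hmod : M % p = N % p := h.of_dvd (dvd_pow_self p m.succ_ne_zero)
  have hM : ¬ p ∣ M := by rwa [Nat.dvd_iff_mod_eq_zero, hmod, ← Nat.dvd_iff_mod_eq_zero]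
  rw [← Int.natCast_modEq_iff, syracuseNumerator, syracuseNumerator,
    Int.toNat_of_nonneg (mul_add_residue_pos_of_not_dvd hp hr hM).le,
    Int.toNat_of_nonneg (mul_add_residue_pos_of_not_dvd hp hr hN).le, hmod]
  exact ((Int.natCast_modEq_iff.mpr h).mul_left _).add_right _

local notation "T" => syracuseNumerator p q r

theorem not_dvd_syracuse (hp : 1 < p) (hr : ∀ j, 1 ≤ j → j < p → 1 ≤ q * j + r j)
    (hS : ∀ n, S n = T n / p ^ padicValNat p (T n)) (hN : ¬ p ∣ N) : ¬ p ∣ S N := by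
  rw [hS]
  exact not_dvd_div_pow_padicValNat hp.ne' (syracuseNumerator_ne_zero (by omega) hr hN)

theorem syracuse_modEq (hp : 1 < p) (hr : ∀ j, 1 ≤ j → j < p → 1 ≤ q * j + r j)
    (hS : ∀ n, S n = T n / p ^ padicValNat p (T n)) (hN : ¬ p ∣ N)
    (h : M ≡ N [MOD p ^ (m + 1)]) (hv : padicValNat p (T N) ≤ m) :
    padicValNat p (T M) = padicValNat p (T N) ∧
      S M ≡ S N [MOD p ^ (m - padicValNat p (T N) + 1)] := by
  have hM : ¬ p ∣ M := (h.dvd_iff (dvd_pow_self p m.succ_ne_zero)).not.mpr hN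
  have hT := syracuseNumerator_modEq (by omega) hr hN h
  have hval := padicValNat_eq_of_modEq hp.ne' (syracuseNumerator_ne_zero (by omega) hr hN)
    (syracuseNumerator_ne_zero (by omega) hr hM) hT.symm hv
  refine ⟨hval, ?_⟩
  rw [hS, hS]
  exact (div_pow_padicValNat_modEq (by omega) hT.symm hv hval).symm

theorem syracuse_iterate_modEq (hp : 1 < p) (hr : ∀ j, 1 ≤ j → j < p → 1 ≤ q * j + r j)
    (hS : ∀ n, S n = T n / p ^ padicValNat p (T n)) (k : ℕ) :
    ∀ N M, ¬ p ∣ N →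
      M ≡ N [MOD p ^ (∑ i ∈ Finset.range k, padicValNat p (T (S^[i] N)) + 1)] →
      (∀ i < k, padicValNat p (T (S^[i] M)) = padicValNat p (T (S^[i] N))) ∧
        ∀ i < k + 1, S^[i] M % p = S^[i] N % p := by
  induction k with
  | zero =>
    intro N M _ h
    refine ⟨fun i hi => absurd hi (Nat.not_lt_zero i), fun i hi => ?_⟩
    obtain rfl : i = 0 := by omega
    simpa [Nat.ModEq] using h
  | succ k ih =>
    intro N M hN h
    simp only [Finset.sum_range_succ', Function.iterate_succ_apply,
      Function.iterate_zero_apply] at h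
    obtain ⟨hval, hSmod⟩ := syracuse_modEq hp hr hS hN h (Nat.le_add_left _ _)
    rw [Nat.add_sub_cancel] at hSmod
    obtain ⟨ihval, ihmod⟩ := ih (S N) (S M) (not_dvd_syracuse hp hr hS hN) hSmod
    refine ⟨?_, ?_⟩
    · rintro (_ | i) hi
      · simpa using hval
      · simpa only [Function.iterate_succ_apply] using ihval i (by omega)
    · rintro (_ | i) hi
      · exact h.of_dvd (dvd_pow_self p (Nat.succ_ne_zero _))
      · simpa only [Function.iterate_succ_apply] using ihmod i (by omega)

end Syracuse

theorem stmt2_general (p q : ℕ) (hp : 2 ≤ p)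
    (r : ℕ → ℤ) (hr1 : ∀ j, 1 ≤ j → j < p → 1 ≤ q * j + r j)
    (S : ℕ → ℕ)
    (hS : ∀ N, S N = ((q * N : ℤ) + r (N % p)).toNat /
      p ^ (padicValNat p ((q * N : ℤ) + r (N % p)).toNat))
    (a : ℕ → ℕ → ℕ)
    (ha : ∀ i N, a i N = padicValNat p ((q * S^[i] N : ℤ) + r (S^[i] N % p)).toNat)
    (R : ℕ → ℕ → ℤ)
    (hR : ∀ i N, R i N = r (S^[i] N % p)) :
    ∀ N, 1 ≤ N → ¬ p ∣ N → ∀ k : ℕ, ∀ m : ℕ, m = ∑ i ∈ Finset.range k, a i N →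
      ∀ M : ℕ, 1 ≤ M → M % p ^ (m + 1) = N % p ^ (m + 1) →
        (∀ i < k, a i M = a i N) ∧ (∀ i < k + 1, R i M = R i N) := by
  intro N _ hN k m hm M _ hMN
  subst hm
  simp only [ha] at hMN ⊢
  obtain ⟨hval, hmod⟩ := syracuse_iterate_modEq hp hr1 hS k N M hN hMN
  exact ⟨hval, fun i hi => by rw [hR, hR, hmod i hi]⟩

/-- Periodicity of the valuation and residue sequences: if `M ≡ N (mod p^{m+1})`
with `m = a_1(N)+...+a_k(N)`, then the first `k` valuations and first `k+1`
residue values of `M` and `N` agree. -/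
theorem stmt2 (p q : ℕ) (hp : 2 ≤ p) (hq : 2 ≤ q) (hpq : Nat.Coprime p q)
    (r : ℕ → ℤ) (hr1 : ∀ j, 1 ≤ j → j < p → 1 ≤ q * j + r j)
    (hr2 : ∀ j, 1 ≤ j → j < p → (p : ℤ) ∣ q * j + r j)
    (S : ℕ → ℕ)
    (hS : ∀ N, S N = ((q * N : ℤ) + r (N % p)).toNat /
      p ^ (padicValNat p ((q * N : ℤ) + r (N % p)).toNat))
    (a : ℕ → ℕ → ℕ)
    (ha : ∀ i N, a i N = padicValNat p ((q * S^[i] N : ℤ) + r (S^[i] N % p)).toNat)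
    (R : ℕ → ℕ → ℤ)
    (hR : ∀ i N, R i N = r (S^[i] N % p)) :
    ∀ N, 1 ≤ N → ¬ p ∣ N → ∀ k : ℕ, ∀ m : ℕ, m = ∑ i ∈ Finset.range k, a i N →
      ∀ M : ℕ, 1 ≤ M → M % p ^ (m + 1) = N % p ^ (m + 1) →
        (∀ i < k, a i M = a i N) ∧ (∀ i < k + 1, R i M = R i N) :=
  stmt2_general p q hp r hr1 S hS a ha R hR
end

section
/- Let p ≥ 2, μ = p/(p-1), and c' > 0. There exists c = c(c',p) > 0 and a constant K such that for all m, k ∈ ℕ with m ≥ (μ + c')·k one has (p-1)^k · p^{-m} · binomial(m, k) ≤ K · p^{-c·m}. -/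
/-- Stirling-type estimate: if `m ≥ (μ + c') k` with `μ = p/(p-1)` then
`(p-1)^k p^{-m} C(m,k) ≤ K p^{-c m}` for some `c, K > 0` depending only on `c'` and `p`. -/
theorem stmt4 (p : ℕ) (hp : 2 ≤ p) (c' : ℝ) (hc' : 0 < c') :
    ∃ c > (0 : ℝ), ∃ K > (0 : ℝ), ∀ m k : ℕ,
      ((p : ℝ) / ((p : ℝ) - 1) + c') * k ≤ (m : ℝ) →
      ((p : ℝ) - 1) ^ k * (p : ℝ) ^ (-(m : ℝ)) * (Nat.choose m k : ℝ)
        ≤ K * (p : ℝ) ^ (-(c * m)) := by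
  have hP2 : (2:ℝ) ≤ (p:ℝ) := by exact_mod_cast hp
  set P : ℝ := (p:ℝ) with hPdef
  have hP0 : 0 < P := by linarith
  have hP1 : 0 < P - 1 := by linarith
  set μ : ℝ := P / (P - 1) with hμdef
  have hμ0 : 0 < μ := div_pos hP0 hP1
  have hμc : 0 < μ + c' := by linarith
  set θ : ℝ := 1 / (μ + c') with hθdef
  have hθ0 : 0 < θ := by positivity
  have hθμ : θ * (μ + c') = 1 := by
    rw [hθdef]; field_simp
  have hμθ : μ * θ < 1 := by
    rw [hθdef, mul_one_div, div_lt_one hμc]; linarith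
  set ε : ℝ := (1 - μ * θ) / 2 with hεdef
  have hε0 : 0 < ε := by rw [hεdef]; linarith
  set t : ℝ := 1 - ε with htdef
  have hμθ0 : 0 < μ * θ := by positivity
  have htμθ : μ * θ < t := by rw [htdef, hεdef]; linarith
  have ht0 : 0 < t := lt_trans hμθ0 htμθ
  have ht1 : t < 1 := by rw [htdef]; linarith
  set a : ℝ := ε / μ - θ * (ε / t) with hadef
  have ha : 0 < a := by
    rw [hadef]
    have h1 : θ * (ε / t) < ε / μ := by
      rw [mul_div_assoc', div_lt_div_iff₀ ht0 hμ0]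
      nlinarith
    linarith
  have hlogP : 0 < Real.log P := Real.log_pos (by linarith)
  refine ⟨a / Real.log P, div_pos ha hlogP, 1, one_pos, ?_⟩
  intro m k hmk
  rw [one_mul]
  have hRHS : P ^ (-(a / Real.log P * (m:ℝ))) = Real.exp (-(a * m)) := by
    rw [Real.rpow_def_of_pos hP0]
    congr 1
    field_simp
  rw [hRHS]
  have hkθ : (k:ℝ) ≤ θ * m := by
    have h := mul_le_mul_of_nonneg_left hmk hθ0.le
    calc (k:ℝ) = θ * ((μ + c') * k) := by rw [← mul_assoc, hθμ, one_mul]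
    _ ≤ θ * m := h
  by_cases hkm : k ≤ m
  · -- main case
    have stepA : (Nat.choose m k : ℝ) * ((P-1)*t)^k ≤ (1 + (P-1)*t)^m := by
      have hmem : k ∈ Finset.range (m+1) := Finset.mem_range.mpr (Nat.lt_succ_of_le hkm)
      have := add_pow ((P-1)*t) 1 m
      calc (Nat.choose m k : ℝ) * ((P-1)*t)^k
          = ((P-1)*t)^k * (1:ℝ)^(m-k) * (Nat.choose m k : ℝ) := by ring
        _ ≤ ∑ i ∈ Finset.range (m+1), ((P-1)*t)^i * (1:ℝ)^(m-i) * (Nat.choose m i : ℝ) := by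
            apply Finset.single_le_sum (f := fun i => ((P-1)*t)^i * (1:ℝ)^(m-i) * (Nat.choose m i : ℝ)) _ hmem
            intro i _
            positivity
        _ = ((P-1)*t + 1)^m := (add_pow ((P-1)*t) 1 m).symm
        _ = (1 + (P-1)*t)^m := by ring
    have stepB : 1 + (P-1)*t ≤ P * Real.exp (-(ε/μ)) := by
      have h1 : -(ε/μ) + 1 ≤ Real.exp (-(ε/μ)) := Real.add_one_le_exp _
      have h2 : P * (ε/μ) = (P-1) * ε := by
        rw [hμdef]; field_simp
      nlinarith [mul_le_mul_of_nonneg_left h1 hP0.le]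
    have hlogt : Real.log t < 0 := Real.log_neg ht0 ht1
    have stepC : Real.exp (θ * m * Real.log t) ≤ t^k := by
      have h1 : θ * m * Real.log t ≤ k * Real.log t :=
        mul_le_mul_of_nonpos_right hkθ hlogt.le
      calc Real.exp (θ * m * Real.log t) ≤ Real.exp (k * Real.log t) := Real.exp_le_exp.mpr h1
        _ = (Real.exp (Real.log t))^k := by rw [← Real.exp_nat_mul]
        _ = t^k := by rw [Real.exp_log ht0]
    have stepD : -Real.log t ≤ ε / t := by
      have h1 : Real.log (1/t) ≤ 1/t - 1 := Real.log_le_sub_one_of_pos (by positivity)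
      rw [one_div, Real.log_inv] at h1
      have h2 : (1:ℝ)/t - 1 = ε / t := by
        field_simp [htdef]; linarith
      rw [one_div] at h2
      linarith [h1, h2.le, h2.ge]
    have key : (Nat.choose m k : ℝ) * (P-1)^k ≤ Real.exp (-(a*m)) * P^m := by
      have htk : (0:ℝ) < t^k := pow_pos ht0 k
      calc (Nat.choose m k : ℝ) * (P-1)^k
          = ((Nat.choose m k : ℝ) * ((P-1)*t)^k) * (t^k)⁻¹ := by
            rw [mul_pow]; field_simp
        _ ≤ (1 + (P-1)*t)^m * (t^k)⁻¹ := by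
            exact mul_le_mul_of_nonneg_right stepA (by positivity)
        _ ≤ (P * Real.exp (-(ε/μ)))^m * (Real.exp (θ * m * Real.log t))⁻¹ := by
            apply mul_le_mul
            · apply pow_le_pow_left₀ (by positivity) stepB
            · exact inv_anti₀ (Real.exp_pos _) stepC
            · positivity
            · positivity
        _ = P^m * Real.exp (m * -(ε/μ) + -(θ * m * Real.log t)) := by
            rw [mul_pow, ← Real.exp_nat_mul, ← Real.exp_neg, mul_assoc, ← Real.exp_add]
        _ ≤ P^m * Real.exp (-(a*m)) := by
            apply mul_le_mul_of_nonneg_left _ (by positivity)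
            apply Real.exp_le_exp.mpr
            have h1 : -(θ * m) * Real.log t ≤ θ * m * (ε / t) := by
              have := mul_le_mul_of_nonneg_left stepD (by positivity : (0:ℝ) ≤ θ * m)
              linarith
            have : -(a*m) = m * -(ε/μ) + θ * m * (ε/t) := by rw [hadef]; ring
            linarith
        _ = Real.exp (-(a*m)) * P^m := mul_comm _ _
    have hPm : P ^ (-(m:ℝ)) = (P^m)⁻¹ := by
      rw [← Real.rpow_natCast P m, ← Real.rpow_neg hP0.le]
    rw [hPm]
    have heq : (P-1)^k * (P^m)⁻¹ * (Nat.choose m k : ℝ)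
        = ((Nat.choose m k : ℝ) * (P-1)^k) / P^m := by ring
    rw [heq, div_le_iff₀ (pow_pos hP0 m)]
    exact key
  · -- k > m : choose = 0
    have : Nat.choose m k = 0 := Nat.choose_eq_zero_of_lt (Nat.lt_of_not_le hkm)
    rw [this]
    simp
    positivity
end

section
/- Let p ≥ 2 and let G_1, G_2, ... be i.i.d. geometric random variables on ℕ = {1,2,...} with P(G_1 = N) = (p-1)p^{-N} (so E[G_1] = μ = p/(p-1)). Then for every t ≥ 1 and n ∈ ℕ, P(G_1 + ... + G_n ≥ t·n·μ) ≤ exp(−n(t − 1 − log t)). -/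
open MeasureTheory ProbabilityTheory

/-!
Chernoff's method with the exponential tilt `a = p t / (t + p - 1)`, chosen so that
`E[a ^ G] = (p - 1) a / (p - a) = t`. Markov's inequality and independence give
`P(S ≥ c) ≤ t ^ n / a ^ c` for `c = t n p / (p - 1)`, and `log a ≥ 1 - 1 / a = (p - 1)(t - 1) / (p t)`
turns `c log a` into at least `n (t - 1)`.
-/

namespace ProbabilityTheory

variable {Ω : Type*} [MeasurableSpace Ω] {μ : Measure Ω}

lemma lintegral_pow_of_geometric {q a : ℝ} (hq : 1 < q) (ha : 0 ≤ a) (haq : a < q)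
    {G : Ω → ℕ} (hG : Measurable G)
    (hdist : ∀ N, 1 ≤ N → μ (G ⁻¹' {N}) = ENNReal.ofReal ((q - 1) / q ^ N))
    (hdist0 : μ (G ⁻¹' {0}) = 0) :
    ∫⁻ ω, ENNReal.ofReal (a ^ G ω) ∂μ = ENNReal.ofReal ((q - 1) * a / (q - a)) := by
  have hr0 : 0 ≤ a / q := by positivity
  have hr1 : a / q < 1 := (div_lt_one (by linarith)).mpr haq
  have hterm : ∀ N : ℕ, ENNReal.ofReal (a ^ (N + 1)) * μ (G ⁻¹' {N + 1})
      = ENNReal.ofReal ((q - 1) * (a / q) * (a / q) ^ N) := by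
    intro N
    rw [hdist (N + 1) N.succ_pos, ← ENNReal.ofReal_mul (by positivity), div_pow]
    congr 1
    field_simp
    ring
  have hsum : HasSum (fun N : ℕ => (q - 1) * (a / q) * (a / q) ^ N)
      ((q - 1) * (a / q) * (1 - a / q)⁻¹) :=
    (hasSum_geometric_of_lt_one hr0 hr1).mul_left _
  have hval : (q - 1) * (a / q) * (1 - a / q)⁻¹ = (q - 1) * a / (q - a) := by
    rw [one_sub_div (by linarith), inv_div]
    field_simp [(by linarith : q - a ≠ 0)]
  have hf : Measurable fun N : ℕ => ENNReal.ofReal (a ^ N) := measurable_from_nat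
  calc ∫⁻ ω, ENNReal.ofReal (a ^ G ω) ∂μ
      = ∑' N : ℕ, ENNReal.ofReal (a ^ N) * μ (G ⁻¹' {N}) := by
        rw [← lintegral_map hf hG, lintegral_countable']
        simp only [Measure.map_apply hG (measurableSet_singleton _)]
    _ = ∑' N : ℕ, ENNReal.ofReal ((q - 1) * (a / q) * (a / q) ^ N) := by
        rw [tsum_eq_zero_add' ENNReal.summable, hdist0, mul_zero, zero_add]
        exact tsum_congr hterm
    _ = _ := by
        rw [← ENNReal.ofReal_tsum_of_nonneg (fun N => by have := sub_pos.2 hq; positivity)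
          hsum.summable, hsum.tsum_eq, hval]

lemma lintegral_pow_sum_eq_prod {ι : Type*} {a : ℝ} (ha : 0 ≤ a) {G : ι → Ω → ℕ}
    (hG : ∀ i, Measurable (G i)) (hindep : iIndepFun G μ) (s : Finset ι) :
    ∫⁻ ω, ENNReal.ofReal (a ^ ∑ i ∈ s, G i ω) ∂μ
      = ∏ i ∈ s, ∫⁻ ω, ENNReal.ofReal (a ^ G i ω) ∂μ := by
  have hf : Measurable fun N : ℕ => ENNReal.ofReal (a ^ N) := measurable_from_nat
  have h := lintegral_prod_eq_prod_lintegral_of_indepFun s _ (hindep.comp _ fun _ => hf)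
    fun i => hf.comp (hG i)
  simp only [Function.comp_apply] at h
  rw [← h]
  simp only [← ENNReal.ofReal_prod_of_nonneg fun _ _ => pow_nonneg ha _,
    Finset.prod_pow_eq_pow_sum]

lemma measure_ge_le_lintegral_pow_div {a : ℝ} (ha : 1 ≤ a) (c : ℝ) {S : Ω → ℕ}
    (hS : Measurable S) :
    μ {ω | c ≤ S ω} ≤ (∫⁻ ω, ENNReal.ofReal (a ^ S ω) ∂μ) / ENNReal.ofReal (a ^ c) := by
  have hpos : 0 < a ^ c := Real.rpow_pos_of_pos (by linarith) c
  calc μ {ω | c ≤ S ω}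
      ≤ μ {ω | ENNReal.ofReal (a ^ c) ≤ ENNReal.ofReal (a ^ S ω)} := by
        refine measure_mono fun ω hω => ENNReal.ofReal_le_ofReal ?_
        rw [← Real.rpow_natCast]
        exact Real.rpow_le_rpow_of_exponent_le ha hω
    _ ≤ _ := meas_ge_le_lintegral_div
        ((measurable_from_nat (f := fun N : ℕ => ENNReal.ofReal (a ^ N))).comp hS).aemeasurable
        (by simpa using hpos) ENNReal.ofReal_ne_top

end ProbabilityTheory

noncomputable def geometricTilt (q t : ℝ) : ℝ := q * t / (t + q - 1)

section GeometricTilt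

variable {q t : ℝ}

lemma one_le_geometricTilt (hq : 1 < q) (ht : 1 ≤ t) : 1 ≤ geometricTilt q t := by
  rw [geometricTilt, le_div_iff₀ (by linarith)]
  nlinarith

lemma geometricTilt_lt (hq : 1 < q) (ht : 1 ≤ t) : geometricTilt q t < q := by
  rw [geometricTilt, div_lt_iff₀ (by linarith)]
  nlinarith

lemma geometricTilt_mgf (hq : 1 < q) (ht : 1 ≤ t) :
    (q - 1) * geometricTilt q t / (q - geometricTilt q t) = t := by
  have hd : t + q - 1 ≠ 0 := by linarith
  rw [div_eq_iff (sub_ne_zero.mpr (geometricTilt_lt hq ht).ne'), geometricTilt]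
  field_simp
  ring

lemma div_le_log_geometricTilt (hq : 1 < q) (ht : 1 ≤ t) :
    (q - 1) * (t - 1) / (q * t) ≤ Real.log (geometricTilt q t) := by
  have hpos : 0 < geometricTilt q t := by linarith [one_le_geometricTilt hq ht]
  convert Real.one_sub_inv_le_log_of_pos hpos using 1
  rw [geometricTilt, inv_div]
  field_simp
  ring

lemma pow_div_geometricTilt_rpow_le (hq : 1 < q) (ht : 1 ≤ t) (n : ℕ) :
    t ^ n / geometricTilt q t ^ (t * n * (q / (q - 1)))
      ≤ Real.exp (-(n * (t - 1 - Real.log t))) := by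
  have hpos : 0 < geometricTilt q t := by linarith [one_le_geometricTilt hq ht]
  have hlog : n * (t - 1) ≤ t * n * (q / (q - 1)) * Real.log (geometricTilt q t) :=
    calc (n : ℝ) * (t - 1) = t * n * (q / (q - 1)) * ((q - 1) * (t - 1) / (q * t)) := by
          field_simp [(by linarith : q - 1 ≠ 0)]
      _ ≤ _ := by gcongr; exact div_le_log_geometricTilt hq ht
  rw [Real.rpow_def_of_pos hpos, ← Real.exp_log (by positivity : 0 < t ^ n), ← Real.exp_sub,
    Real.log_pow, Real.exp_le_exp]
  nlinarith

end GeometricTilt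

theorem stmt5_general (p : ℕ) (hp : 2 ≤ p)
    {Ω : Type*} [MeasurableSpace Ω] (μ : Measure Ω)
    (G : ℕ → Ω → ℕ) (hmeas : ∀ i, Measurable (G i))
    (hindep : iIndepFun G μ)
    (hdist : ∀ i N, 1 ≤ N → μ (G i ⁻¹' {N}) = ENNReal.ofReal (((p : ℝ) - 1) / (p : ℝ) ^ N))
    (hdist0 : ∀ i, μ (G i ⁻¹' {0}) = 0)
    (n : ℕ) (t : ℝ) (ht : 1 ≤ t) :
    μ {ω | t * n * ((p : ℝ) / ((p : ℝ) - 1)) ≤ ∑ i ∈ Finset.range n, (G i ω : ℝ)}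
      ≤ ENNReal.ofReal (Real.exp (-(n * (t - 1 - Real.log t)))) := by
  have hq : (1 : ℝ) < p := by exact_mod_cast hp
  set a := geometricTilt p t
  set c := t * n * ((p : ℝ) / ((p : ℝ) - 1))
  have ha : 1 ≤ a := one_le_geometricTilt hq ht
  have hmgf : ∀ i, ∫⁻ ω, ENNReal.ofReal (a ^ G i ω) ∂μ = ENNReal.ofReal t := fun i => by
    rw [lintegral_pow_of_geometric hq (by linarith) (geometricTilt_lt hq ht) (hmeas i) (hdist i)
      (hdist0 i), geometricTilt_mgf hq ht]
  calc μ {ω | c ≤ ∑ i ∈ Finset.range n, (G i ω : ℝ)}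
      = μ {ω | c ≤ ((∑ i ∈ Finset.range n, G i ω : ℕ) : ℝ)} := by simp only [Nat.cast_sum]
    _ ≤ (∫⁻ ω, ENNReal.ofReal (a ^ ∑ i ∈ Finset.range n, G i ω) ∂μ) / ENNReal.ofReal (a ^ c) :=
        measure_ge_le_lintegral_pow_div ha c (Finset.measurable_sum _ fun i _ => hmeas i)
    _ = ENNReal.ofReal (t ^ n / a ^ c) := by
        rw [lintegral_pow_sum_eq_prod (by linarith) hmeas hindep, Finset.prod_congr rfl
          fun i _ => hmgf i, Finset.prod_const, Finset.card_range,
          ← ENNReal.ofReal_pow (by linarith), ENNReal.ofReal_div_of_pos (by positivity)]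
    _ ≤ _ := ENNReal.ofReal_le_ofReal (pow_div_geometricTilt_rpow_le hq ht n)

/-- Janson's tail bound: for i.i.d. geometric variables `G_i` on `{1,2,...}` with
`P(G = N) = (p-1) p^{-N}` (mean `μ = p/(p-1)`), one has
`P(G_1 + ... + G_n ≥ t n μ) ≤ exp(-n(t - 1 - log t))` for `t ≥ 1`. -/
theorem stmt5 (p : ℕ) (hp : 2 ≤ p)
    {Ω : Type*} [MeasurableSpace Ω] (μ : Measure Ω) [IsProbabilityMeasure μ]
    (G : ℕ → Ω → ℕ) (hmeas : ∀ i, Measurable (G i))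
    (hindep : iIndepFun G μ)
    (hdist : ∀ i N, 1 ≤ N → μ (G i ⁻¹' {N}) = ENNReal.ofReal (((p : ℝ) - 1) / (p : ℝ) ^ N))
    (hdist0 : ∀ i, μ (G i ⁻¹' {0}) = 0)
    (n : ℕ) (t : ℝ) (ht : 1 ≤ t) :
    μ {ω | t * n * ((p : ℝ) / ((p : ℝ) - 1)) ≤ ∑ i ∈ Finset.range n, (G i ω : ℝ)}
      ≤ ENNReal.ofReal (Real.exp (-(n * (t - 1 - Real.log t)))) :=
  stmt5_general p hp μ G hmeas hindep hdist hdist0 n t ht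
end

section
/- Fix integers p, q ≥ 2 and a tuple R ∈ ℤ^l. Define F_l : ℕ^l → ℤ[1/p] by F_l(a, R) = Σ_{i=1}^l q^{i-1} p^{-(a_{l-i+1} + a_{l-i+2} + ... + a_l)} R_{l-i+1}. If gcd(p,q) = 1 and all entries R_i are nonzero integers with p ∤ R_i, then the map a ↦ F_l(a, R) is injective on tuples a ∈ ℕ^l with all a_i ≥ 1. -/
/-- Partial sum `S_i(b) = b_i + ... + b_{l-1}`. -/
def Saux (l : ℕ) (b : ℕ → ℕ) (i : ℕ) : ℕ := ∑ j ∈ Finset.Ico i l, b j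

/-- Integer tail sums after clearing denominators by `p^M`. -/
def Taux (p q l M : ℕ) (R : ℕ → ℤ) (b : ℕ → ℕ) (i : ℕ) : ℤ :=
  ∑ j ∈ Finset.Ico i l, (q : ℤ) ^ (l - 1 - j) * R j * (p : ℤ) ^ (M - Saux l b j)

lemma Saux_mono (l : ℕ) (b : ℕ → ℕ) {i j : ℕ} (h : i ≤ j) : Saux l b j ≤ Saux l b i :=
  Finset.sum_le_sum_of_subset (Finset.Ico_subset_Ico h le_rfl)

lemma Saux_succ (l : ℕ) (b : ℕ → ℕ) {i : ℕ} (hi : i < l) :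
    Saux l b i = b i + Saux l b (i + 1) :=
  Finset.sum_eq_sum_Ico_succ_bot hi b

lemma Taux_succ (p q l M : ℕ) (R : ℕ → ℤ) (b : ℕ → ℕ) {i : ℕ} (hi : i < l) :
    Taux p q l M R b i =
      (q : ℤ) ^ (l - 1 - i) * R i * (p : ℤ) ^ (M - Saux l b i) + Taux p q l M R b (i + 1) :=
  Finset.sum_eq_sum_Ico_succ_bot hi _

lemma Taux_tail_dvd (p q l M : ℕ) (R : ℕ → ℤ) (b : ℕ → ℕ)
    (hb : ∀ j < l, 1 ≤ b j) {i : ℕ} (hi : i < l) (hM : Saux l b i ≤ M) :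
    (p : ℤ) ^ (M - Saux l b i + 1) ∣ Taux p q l M R b (i + 1) := by
  apply Finset.dvd_sum
  intro j hj
  rw [Finset.mem_Ico] at hj
  have h1 : Saux l b j ≤ Saux l b (i + 1) := Saux_mono l b hj.1
  have h2 : b i + Saux l b (i + 1) = Saux l b i := (Saux_succ l b hi).symm
  have h3 : 1 ≤ b i := hb i hi
  have hle : M - Saux l b i + 1 ≤ M - Saux l b j := by omega
  exact Dvd.dvd.mul_left (pow_dvd_pow _ hle) _

lemma step_aux (p : ℕ) (hp : 2 ≤ p) (c : ℤ) (hc : ¬ (p : ℤ) ∣ c) {M s s' : ℕ}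
    (hs : s ≤ M) (hs' : s' ≤ M) {A A' : ℤ}
    (hA : (p : ℤ) ^ (M - s + 1) ∣ A) (hA' : (p : ℤ) ^ (M - s' + 1) ∣ A')
    (h : c * (p : ℤ) ^ (M - s) + A = c * (p : ℤ) ^ (M - s') + A') :
    s = s' ∧ A = A' := by
  have hp0 : (p : ℤ) ≠ 0 := by
    have : (0 : ℤ) < (p : ℤ) := by exact_mod_cast (by omega : 0 < p)
    exact this.ne'
  have key : ∀ (s s' : ℕ) (A A' : ℤ), s ≤ M → s' ≤ M →
      (p : ℤ) ^ (M - s + 1) ∣ A → (p : ℤ) ^ (M - s' + 1) ∣ A' →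
      c * (p : ℤ) ^ (M - s) + A = c * (p : ℤ) ^ (M - s') + A' → s < s' → False := by
    intro s s' A A' hs hs' hA hA' h hlt
    have h1 : (p : ℤ) ^ (M - s' + 1) ∣ c * (p : ℤ) ^ (M - s) :=
      Dvd.dvd.mul_left (pow_dvd_pow _ (by omega)) c
    have h2 : (p : ℤ) ^ (M - s' + 1) ∣ A := dvd_trans (pow_dvd_pow _ (by omega)) hA
    have h3 : (p : ℤ) ^ (M - s' + 1) ∣ c * (p : ℤ) ^ (M - s') := by
      have heq : c * (p : ℤ) ^ (M - s') = c * (p : ℤ) ^ (M - s) + A - A' := by linarith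
      rw [heq]
      exact dvd_sub (dvd_add h1 h2) hA'
    rw [mul_comm] at h3
    have h4 : (p : ℤ) ^ (M - s') * (p : ℤ) ∣ (p : ℤ) ^ (M - s') * c := by
      rw [← pow_succ]; exact h3
    exact hc ((mul_dvd_mul_iff_left (pow_ne_zero _ hp0)).mp h4)
  have hss : s = s' := by
    rcases lt_trichotomy s s' with h1 | h1 | h1
    · exact absurd (key s s' A A' hs hs' hA hA' h h1) id
    · exact h1
    · exact absurd (key s' s A' A hs' hs hA' hA h.symm h1) id
  subst hss
  exact ⟨rfl, by linarith⟩

lemma Tcast (p q l M : ℕ) (hp : 2 ≤ p) (R : ℕ → ℤ) (b : ℕ → ℕ)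
    (hM : ∀ j, Saux l b j ≤ M) :
    ((Taux p q l M R b 0 : ℤ) : ℚ) =
      (∑ i ∈ Finset.range l,
        (q : ℚ) ^ (l - 1 - i) * (R i : ℚ) / (p : ℚ) ^ (Saux l b i)) * (p : ℚ) ^ M := by
  have hp0 : (p : ℚ) ≠ 0 := by
    have : (0 : ℚ) < (p : ℚ) := by exact_mod_cast (by omega : 0 < p)
    exact this.ne'
  rw [Taux, Finset.sum_mul, Finset.range_eq_Ico]
  push_cast
  refine Finset.sum_congr rfl fun j hj => ?_
  rw [div_mul_eq_mul_div, eq_div_iff (pow_ne_zero _ hp0), mul_assoc, ← pow_add,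
    Nat.sub_add_cancel (hM j)]

/-- Injectivity of `a ↦ F_l(a, R)` on tuples with all entries `≥ 1`,
for fixed `R` with entries nonzero and coprime to `p`. -/
theorem stmt6 (p q : ℕ) (hp : 2 ≤ p) (hq : 2 ≤ q) (hpq : Nat.Coprime p q)
    (l : ℕ) (R : ℕ → ℤ) (hR : ∀ i < l, R i ≠ 0 ∧ ¬ (p : ℤ) ∣ R i)
    (F : (ℕ → ℕ) → ℚ)
    (hF : ∀ a, F a = ∑ i ∈ Finset.range l,
      (q : ℚ) ^ (l - 1 - i) * (R i : ℚ) / (p : ℚ) ^ (∑ j ∈ Finset.Ico i l, a j))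
    (a a' : ℕ → ℕ) (ha : ∀ i < l, 1 ≤ a i) (ha' : ∀ i < l, 1 ≤ a' i)
    (heq : F a = F a') :
    ∀ i < l, a i = a' i := by
  set M : ℕ := Saux l a 0 + Saux l a' 0 with hMdef
  have hMa : ∀ j, Saux l a j ≤ M :=
    fun j => le_trans (Saux_mono l a (Nat.zero_le j)) (Nat.le_add_right _ _)
  have hMa' : ∀ j, Saux l a' j ≤ M :=
    fun j => le_trans (Saux_mono l a' (Nat.zero_le j)) (Nat.le_add_left _ _)
  have hT0 : Taux p q l M R a 0 = Taux p q l M R a' 0 := by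
    have t1 := Tcast p q l M hp R a hMa
    have t2 := Tcast p q l M hp R a' hMa'
    have heq' : ((Taux p q l M R a 0 : ℤ) : ℚ) = ((Taux p q l M R a' 0 : ℤ) : ℚ) := by
      rw [t1, t2]
      congr 1
      have e1 := hF a
      have e2 := hF a'
      simp only [Saux]
      rw [← e1, ← e2, heq]
    exact_mod_cast heq'
  have step' : ∀ i < l, Taux p q l M R a i = Taux p q l M R a' i →
      Saux l a i = Saux l a' i ∧ Taux p q l M R a (i + 1) = Taux p q l M R a' (i + 1) := by
    intro i hi hTi
    have hnd : ¬ (p : ℤ) ∣ (q : ℤ) ^ (l - 1 - i) * R i := by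
      intro hdv
      have hcop : IsCoprime (p : ℤ) ((q : ℤ) ^ (l - 1 - i)) :=
        (Nat.isCoprime_iff_coprime.mpr hpq).pow_right
      exact (hR i hi).2 (hcop.dvd_of_dvd_mul_left hdv)
    exact step_aux p hp _ hnd (hMa i) (hMa' i)
      (Taux_tail_dvd p q l M R a ha hi (hMa i))
      (Taux_tail_dvd p q l M R a' ha' hi (hMa' i))
      (by rw [← Taux_succ p q l M R a hi, ← Taux_succ p q l M R a' hi]; exact hTi)
  have hTall : ∀ i, i ≤ l → Taux p q l M R a i = Taux p q l M R a' i := by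
    intro i
    induction i with
    | zero => intro _; exact hT0
    | succ n ih => intro h; exact (step' n (by omega) (ih (by omega))).2
  have hSall : ∀ i, i ≤ l → Saux l a i = Saux l a' i := by
    intro i hi
    rcases eq_or_lt_of_le hi with h | h
    · subst h; simp [Saux]
    · exact (step' i h (hTall i hi)).1
  intro i hi
  have h1 := hSall i (le_of_lt hi)
  have h2 := hSall (i + 1) hi
  rw [Saux_succ l a hi, Saux_succ l a' hi] at h1
  omega
end

section
/- Let p = 3, q = 6, r(1) = 3, r(2) = 6, and define C(N) = N/3 if 3 ∣ N, C(N) = 6N + r(N mod 3) otherwise. Then C³(N) ≤ (2/3)N + 6 for all N ≥ 1, and consequently for every N ≥ 1 there exists k ≥ 0 with C^k(N) ≤ 18. -/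
/-!
A non-multiple of 3 is sent to `6N + r` with `r ∈ {3, 6}`, a multiple of 9, so the next two steps
divide by 3 and `C³(N) = (6N + r) / 9`. A multiple of 3 is first divided by 3, and in two steps
any `M` goes to at most `2M + 6`. Either way `C³(N) ≤ (2N + 18) / 3 < N` once `N > 18`, so orbits
descend into `[0, 18]`.
-/

def collatzMap (N : ℕ) : ℕ :=
  if N % 3 = 0 then N / 3 else 6 * N + (if N % 3 = 1 then 3 else 6)

namespace collatzMap

lemma apply_of_three_dvd {N : ℕ} (h : 3 ∣ N) : collatzMap N = N / 3 := by
  simp [collatzMap, Nat.mod_eq_zero_of_dvd h]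

lemma apply_le (N : ℕ) : collatzMap N ≤ 6 * N + 6 := by
  unfold collatzMap; split_ifs <;> omega

lemma nine_dvd_apply {N : ℕ} (h : ¬ 3 ∣ N) : 9 ∣ collatzMap N := by
  unfold collatzMap; split_ifs <;> omega

lemma apply_apply_of_nine_dvd {M : ℕ} (h : 9 ∣ M) : collatzMap (collatzMap M) = M / 9 := by
  rw [apply_of_three_dvd (dvd_trans (by norm_num) h),
    apply_of_three_dvd (by omega), Nat.div_div_eq_div_mul]

lemma apply_apply_le (M : ℕ) : collatzMap (collatzMap M) ≤ 2 * M + 6 := by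
  by_cases h : 3 ∣ M
  · have := apply_le (M / 3)
    rw [apply_of_three_dvd h]
    omega
  · have := apply_le M
    rw [apply_of_three_dvd (dvd_trans (by norm_num) (nine_dvd_apply h))]
    omega

lemma three_mul_iterate_three_le (N : ℕ) : 3 * collatzMap^[3] N ≤ 2 * N + 18 := by
  simp only [Function.iterate_succ_apply', Function.iterate_zero_apply]
  by_cases h : 3 ∣ N
  · have := apply_apply_le (N / 3)
    rw [apply_of_three_dvd h]
    omega
  · have := apply_le N
    rw [apply_apply_of_nine_dvd (nine_dvd_apply h)]
    omega

end collatzMap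

theorem Function.exists_iterate_le_of_iterate_lt {f : ℕ → ℕ} {m B : ℕ}
    (h : ∀ N, B < N → f^[m] N < N) (N : ℕ) : ∃ k, f^[k] N ≤ B := by
  induction N using Nat.strong_induction_on with
  | _ N ih =>
    by_cases hN : N ≤ B
    · exact ⟨0, hN⟩
    · obtain ⟨k, hk⟩ := ih _ (h N (by omega))
      exact ⟨k + m, by rwa [Function.iterate_add_apply]⟩

/-- For `p = 3`, `q = 6`, `r(1) = 3`, `r(2) = 6`: `C³(N) ≤ (2/3) N + 6` for all `N ≥ 1`,
and hence every orbit attains a value `≤ 18`. -/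
theorem stmt8 (C : ℕ → ℕ)
    (hC : ∀ N, C N = if N % 3 = 0 then N / 3 else 6 * N + (if N % 3 = 1 then 3 else 6)) :
    (∀ N, 1 ≤ N → (C^[3] N : ℚ) ≤ 2 / 3 * N + 6) ∧
    (∀ N, 1 ≤ N → ∃ k, C^[k] N ≤ 18) := by
  obtain rfl : C = collatzMap := funext hC
  refine ⟨fun N _ => ?_, fun N _ => ?_⟩
  · have : (3 * collatzMap^[3] N : ℚ) ≤ 2 * N + 18 := by
      exact_mod_cast collatzMap.three_mul_iterate_three_le N
    linarith
  · refine Function.exists_iterate_le_of_iterate_lt (m := 3) (fun M hM => ?_) N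
    have := collatzMap.three_mul_iterate_three_le M
    omega
end

section
/- Let p, q ≥ 2 be coprime, r : {1,...,p-1} → ℤ with qj + r(j) ≥ 1 and p ∣ (qj + r(j)) for all j, and q < p^{p/(p-1)}. Assume further r(j) ≥ 0 for all j. Let γ = ((p-1)/p)·log_p(q) and let C be the associated generalized Collatz map. Then for every c > 0, the set {N ∈ ℕ : min_{k≥0} C^k(N) < N^{γ+c}} has natural density 1. -/
open scoped Classical

noncomputable def Tmap (p q : ℕ) (r : ℕ → ℤ) (N : ℕ) : ℕ :=
  if N % p = 0 then N / p else (q * N + (r (N % p)).toNat) / p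

noncomputable def acount (p q : ℕ) (r : ℕ → ℤ) (n N : ℕ) : ℕ :=
  ((Finset.range n).filter (fun i => ¬ ((Tmap p q r)^[i] N) % p = 0)).card

noncomputable def Rmax (p : ℕ) (r : ℕ → ℤ) : ℕ := (Finset.range p).sup (fun j => (r j).toNat)

section K

variable {p q : ℕ} {r : ℕ → ℤ} (hp : 2 ≤ p) (hq : 2 ≤ q) (hpq : Nat.Coprime p q)
    (hr1 : ∀ j, 1 ≤ j → j < p → 1 ≤ q * j + r j)
    (hr2 : ∀ j, 1 ≤ j → j < p → (p : ℤ) ∣ q * j + r j)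
    (hr3 : ∀ j, 1 ≤ j → j < p → 0 ≤ r j)

include hp hr3 in
lemma rtoNat (N : ℕ) (h : ¬ N % p = 0) : ((r (N % p)).toNat : ℤ) = r (N % p) := by
  have h1 : 1 ≤ N % p := Nat.one_le_iff_ne_zero.2 h
  have h2 : N % p < p := Nat.mod_lt _ (by omega)
  exact Int.toNat_of_nonneg (hr3 _ h1 h2)

include hp hr2 hr3 in
lemma pdvd_mul_step (N : ℕ) (h : ¬ N % p = 0) : (q * N + (r (N % p)).toNat) % p = 0 := by
  have h1 : 1 ≤ N % p := Nat.one_le_iff_ne_zero.2 h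
  have h2 : N % p < p := Nat.mod_lt _ (by omega)
  have hd : (p : ℤ) ∣ ((q * N + (r (N % p)).toNat : ℕ) : ℤ) := by
    have hnd : (N : ℤ) = ((N % p : ℕ) : ℤ) + (p : ℤ) * ((N / p : ℕ) : ℤ) := by
      exact_mod_cast (Nat.mod_add_div N p).symm
    push_cast [rtoNat hp hr3 N h]
    have : (q : ℤ) * N + r (N % p) = (q * (N % p : ℕ) + r (N % p)) + p * (q * (N / p : ℕ)) := by
      rw [hnd]; ring
    rw [this]
    exact dvd_add (hr2 _ h1 h2) (Dvd.intro _ rfl)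
  have : (p : ℕ) ∣ (q * N + (r (N % p)).toNat) := by exact_mod_cast hd
  omega


include hp in
lemma div_modeq {n : ℕ} {A B : ℤ} (hA : (p:ℤ) ∣ A) (hB : (p:ℤ) ∣ B)
    (h : A ≡ B [ZMOD (p:ℤ)^(n+1)]) : A / p ≡ B / p [ZMOD (p:ℤ)^n] := by
  obtain ⟨a, rfl⟩ := hA
  obtain ⟨b, rfl⟩ := hB
  have hp0 : (p:ℤ) ≠ 0 := by exact_mod_cast (by omega : p ≠ 0)
  rw [Int.mul_ediv_cancel_left _ hp0, Int.mul_ediv_cancel_left _ hp0]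
  rw [Int.modEq_iff_dvd] at h ⊢
  rw [pow_succ'] at h
  have : (p:ℤ) * b - p * a = p * (b - a) := by ring
  rw [this] at h
  exact (mul_dvd_mul_iff_left hp0).1 h

include hp in
lemma div_modeq_lift {n : ℕ} {A B : ℤ} (hA : (p:ℤ) ∣ A) (hB : (p:ℤ) ∣ B)
    (h : A / p ≡ B / p [ZMOD (p:ℤ)^n]) : A ≡ B [ZMOD (p:ℤ)^(n+1)] := by
  obtain ⟨a, rfl⟩ := hA
  obtain ⟨b, rfl⟩ := hB
  have hp0 : (p:ℤ) ≠ 0 := by exact_mod_cast (by omega : p ≠ 0)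
  rw [Int.mul_ediv_cancel_left _ hp0, Int.mul_ediv_cancel_left _ hp0] at h
  rw [Int.modEq_iff_dvd] at h ⊢
  rw [pow_succ']
  have : (p:ℤ) * b - p * a = p * (b - a) := by ring
  rw [this]
  exact mul_dvd_mul_left _ h

include hp hr1 hr2 hr3 in
lemma CmulStep (C : ℕ → ℕ)
    (hC : ∀ N, C N = if N % p = 0 then N / p else ((q * N : ℤ) + r (N % p)).toNat)
    (N : ℕ) (h : ¬ N % p = 0) : C N = q * N + (r (N % p)).toNat := by
  rw [hC, if_neg h]
  have : ((q * N : ℤ) + r (N % p)) = ((q * N + (r (N % p)).toNat : ℕ) : ℤ) := by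
    push_cast [rtoNat hp hr3 N h]; ring
  rw [this, Int.toNat_natCast]

include hp hr1 hr2 hr3 in
lemma TC_iter (C : ℕ → ℕ)
    (hC : ∀ N, C N = if N % p = 0 then N / p else ((q * N : ℤ) + r (N % p)).toNat)
    (n N : ℕ) : ∃ k, (Tmap p q r)^[n] N = C^[k] N := by
  induction n with
  | zero => exact ⟨0, rfl⟩
  | succ n ih =>
    obtain ⟨k, hk⟩ := ih
    rw [Function.iterate_succ_apply', hk]
    set M := C^[k] N with hM
    by_cases h : M % p = 0
    · refine ⟨k + 1, ?_⟩
      rw [Function.iterate_succ_apply', Tmap, if_pos h, hC, if_pos h]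
    · refine ⟨k + 2, ?_⟩
      have h1 : C M = q * M + (r (M % p)).toNat := CmulStep hp hr1 hr2 hr3 C hC M h
      have h2 : (C M) % p = 0 := by rw [h1]; exact pdvd_mul_step hp hr2 hr3 M h
      have : C^[k+2] N = C (C M) := by
        rw [show k + 2 = 2 + k by ring, Function.iterate_add_apply]
        rfl
      rw [this, hC (C M), if_pos h2, h1, Tmap, if_neg h]

include hp hr2 hr3 in
lemma Tmod {n : ℕ} {N M : ℕ} (h : (N:ℤ) ≡ (M:ℤ) [ZMOD (p:ℤ)^(n+1)]) :
    ((Tmap p q r N : ℕ) : ℤ) ≡ ((Tmap p q r M : ℕ) : ℤ) [ZMOD (p:ℤ)^n] := by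
  have hmodp : N % p = M % p := by
    have h1 : (N:ℤ) ≡ (M:ℤ) [ZMOD (p:ℤ)] := h.of_dvd (dvd_pow_self _ (Nat.succ_ne_zero n))
    have : ((N % p : ℕ) : ℤ) = ((M % p : ℕ) : ℤ) := by
      push_cast
      simpa [Int.ModEq, Int.emod_emod_of_dvd] using h1
    exact_mod_cast this
  by_cases h0 : N % p = 0
  · have hdN : p ∣ N := Nat.dvd_of_mod_eq_zero h0
    have hdM : p ∣ M := Nat.dvd_of_mod_eq_zero (hmodp ▸ h0)
    rw [Tmap, Tmap, if_pos h0, if_pos (hmodp ▸ h0)]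
    push_cast [Int.natCast_ediv]
    exact div_modeq hp (by exact_mod_cast hdN) (by exact_mod_cast hdM) h
  · have h0M : ¬ M % p = 0 := hmodp ▸ h0
    rw [Tmap, Tmap, if_neg h0, if_neg h0M]
    have hdN : (p:ℤ) ∣ ((q * N + (r (N % p)).toNat : ℕ) : ℤ) := by
      have := pdvd_mul_step hp hr2 hr3 N h0
      exact_mod_cast Nat.dvd_of_mod_eq_zero (by omega : (q * N + (r (N % p)).toNat) % p = 0)
    have hdM : (p:ℤ) ∣ ((q * M + (r (M % p)).toNat : ℕ) : ℤ) := by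
      have := pdvd_mul_step hp hr2 hr3 M h0M
      exact_mod_cast Nat.dvd_of_mod_eq_zero (by omega : (q * M + (r (M % p)).toNat) % p = 0)
    push_cast [Int.natCast_ediv]
    have hnum : ((q:ℤ) * N + (r (N % p)).toNat) ≡ ((q:ℤ) * M + (r (M % p)).toNat) [ZMOD (p:ℤ)^(n+1)] := by
      rw [hmodp]
      exact (h.mul_left q).add_right _
    have := div_modeq hp (by push_cast at hdN ⊢; exact hdN) (by push_cast at hdM ⊢; exact hdM) hnum
    convert this using 2 <;> push_cast <;> ring

include hp hr2 hr3 in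
lemma Tmod_iter (i : ℕ) {n : ℕ} {N M : ℕ} (h : (N:ℤ) ≡ (M:ℤ) [ZMOD (p:ℤ)^(n+i)]) :
    (((Tmap p q r)^[i] N : ℕ) : ℤ) ≡ (((Tmap p q r)^[i] M : ℕ) : ℤ) [ZMOD (p:ℤ)^n] := by
  induction i generalizing N M with
  | zero => simpa using h
  | succ i ih =>
    rw [Function.iterate_succ_apply, Function.iterate_succ_apply]
    refine ih ?_
    have : n + (i + 1) = (n + i) + 1 := by ring
    rw [this] at h
    exact Tmod hp hr2 hr3 h


include hp hq hpq hr2 hr3 in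
lemma Tinj (n : ℕ) : ∀ N M : ℕ, (∀ i < n, (Tmap p q r)^[i] N % p = (Tmap p q r)^[i] M % p) →
    (N:ℤ) ≡ (M:ℤ) [ZMOD (p:ℤ)^n] := by
  induction n with
  | zero => intro N M _; simp [Int.modEq_one]
  | succ n ih =>
    intro N M h
    have h0 : N % p = M % p := by
      have := h 0 (Nat.succ_pos n); simpa using this
    have hT : ((Tmap p q r N : ℕ) : ℤ) ≡ ((Tmap p q r M : ℕ) : ℤ) [ZMOD (p:ℤ)^n] := by
      refine ih _ _ fun i hi => ?_
      have := h (i+1) (by omega)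
      simpa [Function.iterate_succ_apply] using this
    by_cases hd : N % p = 0
    · have hdN : p ∣ N := Nat.dvd_of_mod_eq_zero hd
      have hdM : p ∣ M := Nat.dvd_of_mod_eq_zero (h0 ▸ hd)
      rw [Tmap, Tmap, if_pos hd, if_pos (h0 ▸ hd)] at hT
      push_cast [Int.natCast_ediv] at hT
      exact div_modeq_lift hp (by exact_mod_cast hdN) (by exact_mod_cast hdM) hT
    · have hdM' : ¬ M % p = 0 := h0 ▸ hd
      rw [Tmap, Tmap, if_neg hd, if_neg hdM'] at hT
      have hdN : (p:ℤ) ∣ ((q:ℤ) * N + ((r (N % p)).toNat : ℤ)) := by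
        have := pdvd_mul_step hp hr2 hr3 N hd
        have h2 : (p:ℕ) ∣ q * N + (r (N % p)).toNat := Nat.dvd_of_mod_eq_zero this
        exact_mod_cast h2
      have hdM : (p:ℤ) ∣ ((q:ℤ) * M + ((r (M % p)).toNat : ℤ)) := by
        have := pdvd_mul_step hp hr2 hr3 M hdM'
        have h2 : (p:ℕ) ∣ q * M + (r (M % p)).toNat := Nat.dvd_of_mod_eq_zero this
        exact_mod_cast h2
      push_cast [Int.natCast_ediv] at hT
      have hlift := div_modeq_lift hp hdN hdM hT
      rw [Int.modEq_iff_dvd] at hlift ⊢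
      rw [h0] at hlift
      have : ((q:ℤ) * M + ((r (M % p)).toNat : ℤ)) - ((q:ℤ) * N + ((r (M % p)).toNat : ℤ))
          = (q:ℤ) * (M - N) := by ring
      rw [this] at hlift
      have hcop : IsCoprime ((p:ℤ)^(n+1)) (q:ℤ) := by
        refine IsCoprime.pow_left ?_
        rw [Int.isCoprime_iff_gcd_eq_one]
        simpa [Int.gcd] using hpq
      exact hcop.dvd_of_dvd_mul_left hlift


include hp hr2 hr3 in
lemma Tres_eq {n i N M : ℕ} (hi : i < n) (h : N % p^n = M % p^n) :
    (Tmap p q r)^[i] N % p = (Tmap p q r)^[i] M % p := by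
  have hmod : (N:ℤ) ≡ (M:ℤ) [ZMOD (p:ℤ)^((n - i - 1 + 1) + i)] := by
    have he : (n - i - 1 + 1) + i = n := by omega
    rw [he]
    have : ((N % p^n : ℕ) : ℤ) = ((M % p^n : ℕ) : ℤ) := by exact_mod_cast h
    push_cast at this
    simpa [Int.ModEq, Int.emod_emod_of_dvd] using this
  have := (Tmod_iter hp hr2 hr3 i hmod).of_dvd (dvd_pow_self _ (Nat.succ_ne_zero _))
  have h2 : (((Tmap p q r)^[i] N % p : ℕ) : ℤ) = (((Tmap p q r)^[i] M % p : ℕ) : ℤ) := by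
    push_cast
    simpa [Int.ModEq] using this
  exact_mod_cast h2

include hp hr2 hr3 in
lemma acount_congr {n N M : ℕ} (h : N % p^n = M % p^n) :
    acount p q r n N = acount p q r n M := by
  unfold acount
  congr 1
  apply Finset.filter_congr
  intro i hi
  rw [Finset.mem_range] at hi
  simp [Tres_eq hp hr2 hr3 hi h]

lemma acount_succ (n N : ℕ) : acount p q r (n+1) N =
    acount p q r n N + (if (Tmap p q r)^[n] N % p = 0 then 0 else 1) := by
  unfold acount
  rw [Finset.range_add_one, Finset.filter_insert]
  by_cases h : (Tmap p q r)^[n] N % p = 0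
  · rw [if_neg (by simpa using h), if_pos h, add_zero]
  · rw [if_pos h, if_neg h, Finset.card_insert_of_notMem (by simp)]

lemma rmax_le (N : ℕ) (h : ¬ N % p = 0) (hp' : 0 < p) :
    ((r (N % p)).toNat : ℝ) ≤ (Rmax p r : ℝ) := by
  have : (r (N % p)).toNat ≤ Rmax p r :=
    Finset.le_sup (f := fun j => (r j).toNat) (Finset.mem_range.2 (Nat.mod_lt _ hp'))
  exact_mod_cast this

include hp hq in
lemma Tval (n N : ℕ) : (((Tmap p q r)^[n] N : ℕ) : ℝ) ≤
    (q:ℝ)^(acount p q r n N) * N / (p:ℝ)^n + n * (Rmax p r : ℝ) * (q:ℝ)^(acount p q r n N) := by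
  have hp0 : (0:ℝ) < (p:ℝ) := by positivity
  have hq1 : (1:ℝ) ≤ (q:ℝ) := by exact_mod_cast (by omega : 1 ≤ q)
  have hR0 : (0:ℝ) ≤ (Rmax p r : ℝ) := by positivity
  induction n with
  | zero => simp [acount]
  | succ n ih =>
    set x := (Tmap p q r)^[n] N with hx
    set a := acount p q r n N with ha
    have hxnn : (0:ℝ) ≤ (x:ℝ) := by positivity
    rw [Function.iterate_succ_apply', acount_succ]
    by_cases h : x % p = 0
    · rw [if_pos h, Tmap.eq_def, if_pos h, add_zero]
      have hstep : ((x / p : ℕ) : ℝ) ≤ (x:ℝ)/p := Nat.cast_div_le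
      have h2 : (x:ℝ)/p ≤ ((q:ℝ)^a * N / (p:ℝ)^n + n * (Rmax p r : ℝ) * (q:ℝ)^a)/p := by gcongr
      have h3 : ((q:ℝ)^a * N / (p:ℝ)^n + n * (Rmax p r : ℝ) * (q:ℝ)^a)/p
          = (q:ℝ)^a * N / (p:ℝ)^(n+1) + (n * (Rmax p r : ℝ) * (q:ℝ)^a)/p := by
        field_simp
        ring
      have h4 : (n * (Rmax p r : ℝ) * (q:ℝ)^a)/p ≤ ((n:ℝ)+1) * (Rmax p r : ℝ) * (q:ℝ)^a := by
        have hq0 : (0:ℝ) ≤ (q:ℝ)^a := by positivity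
        have hnn : (0:ℝ) ≤ (n:ℝ) * (Rmax p r : ℝ) * (q:ℝ)^a := by positivity
        have hds : ((n:ℝ) * (Rmax p r : ℝ) * (q:ℝ)^a)/p ≤ (n:ℝ) * (Rmax p r : ℝ) * (q:ℝ)^a :=
          div_le_self hnn (by exact_mod_cast (by omega : 1 ≤ p))
        nlinarith [mul_nonneg hR0 hq0]
      push_cast
      calc ((x / p : ℕ) : ℝ) ≤ (x:ℝ)/p := hstep
        _ ≤ _ := h2
        _ = _ := h3
        _ ≤ (q:ℝ)^a * N / (p:ℝ)^(n+1) + ((n:ℝ)+1) * (Rmax p r : ℝ) * (q:ℝ)^a :=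
            add_le_add_right h4 _
    · rw [if_neg h, Tmap.eq_def, if_neg h]
      set t := (r (x % p)).toNat with ht
      have hq0' : (0:ℝ) ≤ (q:ℝ)^a := by positivity
      have hqa1 : (1:ℝ) ≤ (q:ℝ)^(a+1) := one_le_pow₀ hq1
      have hstep : (((q * x + t) / p : ℕ) : ℝ) ≤ ((q * x + t : ℕ) : ℝ)/p := Nat.cast_div_le
      have h2 : ((q * x + t : ℕ) : ℝ)/p ≤ ((q:ℝ) * x + (Rmax p r : ℝ))/p := by
        have htR : t ≤ Rmax p r :=
          Finset.le_sup (f := fun j => (r j).toNat) (Finset.mem_range.2 (Nat.mod_lt _ (by omega)))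
        gcongr
        push_cast
        gcongr

      have h3 : ((q:ℝ) * x + (Rmax p r : ℝ))/p ≤
          ((q:ℝ) * ((q:ℝ)^a * N / (p:ℝ)^n + n * (Rmax p r : ℝ) * (q:ℝ)^a) + (Rmax p r : ℝ))/p := by
        gcongr
      have h4 : ((q:ℝ) * ((q:ℝ)^a * N / (p:ℝ)^n + n * (Rmax p r : ℝ) * (q:ℝ)^a) + (Rmax p r : ℝ))/p
          = (q:ℝ)^(a+1) * N / (p:ℝ)^(n+1) + (n * (Rmax p r : ℝ) * (q:ℝ)^(a+1) + (Rmax p r : ℝ))/p := by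
        field_simp
        ring
      have h5 : (n * (Rmax p r : ℝ) * (q:ℝ)^(a+1) + (Rmax p r : ℝ))/p
          ≤ ((n:ℝ)+1) * (Rmax p r : ℝ) * (q:ℝ)^(a+1) := by
        have hnn : (0:ℝ) ≤ n * (Rmax p r : ℝ) * (q:ℝ)^(a+1) + (Rmax p r : ℝ) := by positivity
        have hds : (n * (Rmax p r : ℝ) * (q:ℝ)^(a+1) + (Rmax p r : ℝ))/p
            ≤ n * (Rmax p r : ℝ) * (q:ℝ)^(a+1) + (Rmax p r : ℝ) :=
          div_le_self hnn (by exact_mod_cast (by omega : 1 ≤ p))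
        nlinarith [mul_nonneg (Nat.cast_nonneg n : (0:ℝ) ≤ n) hR0]
      push_cast
      calc (((q * x + t) / p : ℕ) : ℝ) ≤ ((q * x + t : ℕ) : ℝ)/p := hstep
        _ ≤ ((q:ℝ) * x + (Rmax p r : ℝ))/p := h2
        _ ≤ _ := h3
        _ = _ := h4
        _ ≤ (q:ℝ)^(a+1) * N / (p:ℝ)^(n+1) + ((n:ℝ)+1) * (Rmax p r : ℝ) * (q:ℝ)^(a+1) :=
            add_le_add_right h5 _


include hp hq hpq hr2 hr3 in
lemma genfun (n : ℕ) (t : ℝ) (ht : 0 ≤ t) :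
    ∑ N ∈ Finset.range (p^n), t^(acount p q r n N) ≤ (1 + ((p:ℝ)-1)*t)^n := by
  have hp0 : 0 < p := by omega
  haveI : NeZero p := ⟨by omega⟩
  set vmap : ℕ → (Fin n → Fin p) := fun N i => ⟨(Tmap p q r)^[i.1] N % p, Nat.mod_lt _ hp0⟩
    with hvmap
  have hval : ∀ N, t^(acount p q r n N) = ∏ i : Fin n, (if vmap N i = 0 then 1 else t) := by
    intro N
    have : ∀ i : Fin n, (vmap N i = 0) ↔ ((Tmap p q r)^[i.1] N % p = 0) := by
      intro i
      constructor
      · intro h; have := congrArg Fin.val h; simpa [hvmap] using this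
      · intro h; exact Fin.ext (by simpa [hvmap] using h)
    calc t^(acount p q r n N)
        = t^((Finset.univ : Finset (Fin n)).filter
            (fun i => ¬ (Tmap p q r)^[i.1] N % p = 0)).card := by
          unfold acount
          congr 1
          rw [Finset.card_filter, Finset.card_filter,
            ← Fin.sum_univ_eq_sum_range (fun i => if ¬ (Tmap p q r)^[i] N % p = 0 then 1 else 0)]
      _ = ∏ i : Fin n, (if vmap N i = 0 then 1 else t) := by
          rw [Finset.prod_ite, Finset.prod_const_one, Finset.prod_const, one_mul]
          congr 1
          congr 1
          apply Finset.filter_congr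
          intro i _
          simp [this i]
  have hinj : Set.InjOn vmap (Finset.range (p^n)) := by
    intro N hN M hM hNM
    simp only [Finset.coe_range, Set.mem_Iio] at hN hM
    have hres : ∀ i < n, (Tmap p q r)^[i] N % p = (Tmap p q r)^[i] M % p := by
      intro i hi
      have := congrFun hNM ⟨i, hi⟩
      simpa [hvmap, Fin.ext_iff] using this
    have hmod := Tinj hp hq hpq hr2 hr3 n N M hres
    have h1 : (N:ℤ) % (p:ℤ)^n = N := Int.emod_eq_of_lt (by positivity) (by exact_mod_cast hN)
    have h2 : (M:ℤ) % (p:ℤ)^n = M := Int.emod_eq_of_lt (by positivity) (by exact_mod_cast hM)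
    have : (N:ℤ) = (M:ℤ) := by rw [← h1, ← h2]; exact hmod
    exact_mod_cast this
  calc ∑ N ∈ Finset.range (p^n), t^(acount p q r n N)
      = ∑ N ∈ Finset.range (p^n), ∏ i : Fin n, (if vmap N i = 0 then 1 else t) := by
        exact Finset.sum_congr rfl (fun N _ => hval N)
    _ = ∑ v ∈ (Finset.range (p^n)).image vmap, ∏ i : Fin n, (if v i = 0 then 1 else t) := by
        rw [Finset.sum_image (fun a ha b hb h => hinj ha hb h)]
    _ ≤ ∑ v : (Fin n → Fin p), ∏ i : Fin n, (if v i = 0 then 1 else t) := by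
        apply Finset.sum_le_sum_of_subset_of_nonneg (Finset.subset_univ _)
        intro v _ _
        apply Finset.prod_nonneg
        intro i _
        split <;> norm_num [ht]
    _ = ∏ i : Fin n, ∑ j : Fin p, (if j = 0 then 1 else t) := by
        rw [Finset.prod_univ_sum]
        rw [Fintype.piFinset_univ]
    _ = (1 + ((p:ℝ)-1)*t)^n := by
        have hsum : ∑ j : Fin p, (if j = 0 then (1:ℝ) else t) = 1 + ((p:ℝ)-1)*t := by
          rw [Finset.sum_ite]
          have c1 : (Finset.univ.filter (fun x : Fin p => x = 0)).card = 1 := by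
            simp [Finset.filter_eq']
          have c2 : (Finset.univ.filter (fun x : Fin p => ¬ x = 0)).card = p - 1 := by
            simp [Finset.filter_ne', Finset.card_erase_of_mem]
          simp only [Finset.sum_const, nsmul_eq_mul, c1, c2, Nat.cast_one, mul_one]
          rw [Nat.cast_sub (by omega)]
          push_cast
          ring
        rw [hsum, Finset.prod_const, Finset.card_univ, Fintype.card_fin]


noncomputable def BadSet (p q : ℕ) (r : ℕ → ℤ) (α : ℝ) (n : ℕ) : Finset ℕ :=
  (Finset.range (p^n)).filter (fun N => α * n ≤ (acount p q r n N : ℝ))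

include hp hq hpq hr2 hr3 in
lemma bad_card (α : ℝ) (t : ℝ) (ht : 1 < t) (n : ℕ) :
    ((BadSet p q r α n).card : ℝ) * (t^α)^n ≤ (1 + ((p:ℝ)-1)*t)^n := by
  have ht0 : (0:ℝ) < t := by linarith
  have key : ∀ N ∈ BadSet p q r α n, (t^α)^n ≤ t ^ (acount p q r n N) := by
    intro N hN
    rw [BadSet, Finset.mem_filter] at hN
    have h1 : (t^α)^n = t^(α * n) := by
      rw [← Real.rpow_natCast (t^α) n, ← Real.rpow_mul ht0.le]
    have h2 : t^(α * (n:ℝ)) ≤ t^((acount p q r n N : ℕ) : ℝ) :=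
      Real.rpow_le_rpow_of_exponent_le ht.le hN.2
    rw [h1]
    calc t^(α * (n:ℝ)) ≤ t^((acount p q r n N : ℕ) : ℝ) := h2
      _ = t ^ (acount p q r n N) := Real.rpow_natCast t _
  calc ((BadSet p q r α n).card : ℝ) * (t^α)^n
      = ∑ _N ∈ BadSet p q r α n, (t^α)^n := by rw [Finset.sum_const, nsmul_eq_mul]
    _ ≤ ∑ N ∈ BadSet p q r α n, t ^ (acount p q r n N) := Finset.sum_le_sum key
    _ ≤ ∑ N ∈ Finset.range (p^n), t ^ (acount p q r n N) := by
        apply Finset.sum_le_sum_of_subset_of_nonneg (Finset.filter_subset _ _)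
        intro N _ _
        positivity
    _ ≤ (1 + ((p:ℝ)-1)*t)^n := genfun hp hq hpq hr2 hr3 n t ht0.le

include hp in
lemma exists_t (α : ℝ) (hα : ((p:ℝ)-1)/p < α) :
    ∃ t : ℝ, 1 < t ∧ 1 + ((p:ℝ)-1)*t < (p:ℝ) * t^α := by
  have hp0 : (0:ℝ) < p := by positivity
  set f : ℝ → ℝ := fun x => p * x^α - (((p:ℝ)-1)*x + 1) with hf
  have hd : HasDerivAt f ((p:ℝ)*α - ((p:ℝ)-1)) 1 := by
    have h1 : HasDerivAt (fun x : ℝ => x^α) (α * (1:ℝ)^(α - 1)) 1 :=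
      Real.hasDerivAt_rpow_const (Or.inl one_ne_zero)
    have h2 := h1.const_mul (p:ℝ)
    have h3 : HasDerivAt (fun x : ℝ => ((p:ℝ)-1)*x + 1) ((p:ℝ)-1) 1 := by
      simpa using ((hasDerivAt_id (1:ℝ)).const_mul ((p:ℝ)-1)).add_const 1
    have := h2.sub h3
    rw [Real.one_rpow, mul_one] at this
    exact this
  have hpos : 0 < (p:ℝ)*α - ((p:ℝ)-1) := by
    have := (div_lt_iff₀ hp0).1 hα
    nlinarith
  have hslope := hasDerivAt_iff_tendsto_slope.1 hd
  have hev : ∀ᶠ x in nhdsWithin (1:ℝ) {(1:ℝ)}ᶜ, 0 < slope f 1 x :=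
    hslope.eventually (eventually_gt_nhds hpos)
  have hev' : ∀ᶠ x in nhdsWithin (1:ℝ) (Set.Ioi 1), 0 < slope f 1 x :=
    hev.filter_mono (nhdsWithin_mono 1 (fun x hx => ne_of_gt hx))
  have hmem : ∀ᶠ x in nhdsWithin (1:ℝ) (Set.Ioi 1), x ∈ Set.Ioi (1:ℝ) :=
    self_mem_nhdsWithin
  obtain ⟨t, htpos, htmem⟩ := (hev'.and hmem).exists
  refine ⟨t, htmem, ?_⟩
  have ht1 : (0:ℝ) < t - 1 := by simpa [sub_pos] using htmem
  have hft : 0 < f t := by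
    have hs : slope f 1 t = (f t - f 1) / (t - 1) := slope_def_field f 1 t
    have hf1 : f 1 = 0 := by simp [hf, Real.one_rpow]
    rw [hs, hf1, sub_zero] at htpos
    have := mul_pos htpos ht1
    rwa [div_mul_cancel₀ _ (ne_of_gt ht1)] at this
  simp only [hf] at hft
  linarith


include hp hr2 hr3 in
lemma block_bad (α : ℝ) (m : ℕ) :
    ((Finset.Ico (p^m) (p^(m+1))).filter
      (fun N => α * (m:ℝ) ≤ (acount p q r m N : ℝ))).card ≤ p * (BadSet p q r α m).card := by
  have hpm : 0 < p^m := by positivity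
  have hcard : ((Finset.range p) ×ˢ (BadSet p q r α m)).card = p * (BadSet p q r α m).card := by
    rw [Finset.card_product, Finset.card_range]
  rw [← hcard]
  apply Finset.card_le_card_of_injOn (fun N => (N / p^m, N % p^m))
  · intro N hN
    rw [Finset.mem_coe, Finset.mem_filter, Finset.mem_Ico] at hN
    obtain ⟨⟨hN1, hN2⟩, hN3⟩ := hN
    rw [Finset.mem_coe, Finset.mem_product, Finset.mem_range, BadSet, Finset.mem_filter, Finset.mem_range]
    refine ⟨?_, ?_, ?_⟩
    · rw [Nat.div_lt_iff_lt_mul hpm]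
      calc N < p^(m+1) := hN2
        _ = p * p^m := by ring
    · exact Nat.mod_lt _ hpm
    · rwa [acount_congr hp hr2 hr3 (Nat.mod_mod_of_dvd N dvd_rfl)]
  · intro N hN M hM h
    simp only [Prod.mk.injEq] at h
    obtain ⟨ha, hb⟩ := h
    have h1 := Nat.div_add_mod N (p^m)
    have h2 := Nat.div_add_mod M (p^m)
    rw [← h1, ← h2, ha, hb]

lemma geom_nat_le (P M : ℕ) (hP : 2 ≤ P) : ∑ m ∈ Finset.range (M+1), P^m ≤ 2 * P^M := by
  induction M with
  | zero => simp
  | succ M ih =>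
    rw [Finset.sum_range_succ]
    have : 2 * P^M ≤ P^(M+1) := by
      rw [pow_succ]
      calc 2 * P^M = P^M * 2 := by ring
        _ ≤ P^M * P := by
          exact Nat.mul_le_mul_left _ hP
    omega


include hp in
lemma exists_m1 (R : ℕ) (d : ℝ) (hd : 0 < d) :
    ∃ m₁ : ℕ, ∀ m : ℕ, m₁ ≤ m → (p:ℝ) + m * R < ((p:ℝ)^(d:ℝ))^m := by
  have hp1 : (1:ℝ) < p := by exact_mod_cast (by omega : 1 < p)
  set u : ℝ := (p:ℝ)^(d/2) with hu
  have hu1 : 1 < u := Real.one_lt_rpow_iff_of_pos (by positivity) |>.2 (Or.inl ⟨hp1, by positivity⟩)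
  have hu0 : 0 < u - 1 := by linarith
  set K : ℝ := (p:ℝ) + R / (u - 1) with hK
  obtain ⟨m₁, hm₁⟩ := Filter.eventually_atTop.1
    ((tendsto_pow_atTop_atTop_of_one_lt hu1).eventually_gt_atTop K)
  refine ⟨m₁, fun m hm => ?_⟩
  have hum : K < u^m := hm₁ m hm
  have hum0 : (0:ℝ) < u^m := by positivity
  have hbern : 1 + (m:ℝ) * (u - 1) ≤ u^m := by
    have := one_add_mul_le_pow (by linarith : (-2:ℝ) ≤ u - 1) m
    simpa using this
  have hmle : (m:ℝ) ≤ u^m / (u - 1) := by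
    rw [le_div_iff₀ hu0]
    nlinarith
  have hstep : (p:ℝ) + m * R ≤ K * u^m := by
    have h1 : (m:ℝ) * R ≤ (R:ℝ) * (u^m / (u-1)) := by
      rcases Nat.eq_zero_or_pos R with hR | hR
      · simp [hR]
      · have : (0:ℝ) < R := by exact_mod_cast hR
        calc (m:ℝ) * R = (R:ℝ) * m := by ring
          _ ≤ (R:ℝ) * (u^m / (u-1)) := by
            apply mul_le_mul_of_nonneg_left hmle (le_of_lt this)
    have hKe : K * u^m = (p:ℝ) * u^m + (R:ℝ) * (u^m/(u-1)) := by
      rw [hK]; field_simp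
    have hp_le : (p:ℝ) ≤ (p:ℝ) * u^m := by
      nlinarith [one_le_pow₀ hu1.le (n := m)]
    have expand : ((p:ℝ) + (R:ℝ)/(u-1)) * u^m = (p:ℝ)*u^m + (R:ℝ)*(u^m/(u-1)) := by
      field_simp
    rw [hK, expand]
    linarith
  have hfin : K * u^m < u^m * u^m := mul_lt_mul_of_pos_right hum hum0
  have huu : u^m * u^m = ((p:ℝ)^(d:ℝ))^m := by
    rw [← mul_pow]
    congr 1
    rw [hu, ← Real.rpow_add (by positivity : (0:ℝ) < (p:ℝ))]
    norm_num
  rw [← huu]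
  linarith

include hp hq hpq hr1 hr2 hr3 in
lemma good_implies (C : ℕ → ℕ)
    (hC : ∀ N, C N = if N % p = 0 then N / p else ((q * N : ℤ) + r (N % p)).toNat)
    (α : ℝ) (hα0 : 0 ≤ α) (E : ℝ)
    (hE : α * Real.logb p q < E) (hβ : α * Real.logb p q < 1) :
    ∃ N₁ : ℕ, ∀ N : ℕ, N₁ ≤ N →
      ((acount p q r (Nat.log p N) N : ℝ) < α * (Nat.log p N : ℝ)) →
      ∃ k, (C^[k] N : ℝ) < (N:ℝ)^E := by
  have hp1 : (1:ℝ) < p := by exact_mod_cast (by omega : 1 < p)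
  have hq1 : (1:ℝ) ≤ q := by exact_mod_cast (by omega : 1 ≤ q)
  have hq0 : (0:ℝ) < q := by positivity
  have hp0 : (0:ℝ) < p := by positivity
  set L : ℝ := Real.logb p q with hL
  have hL0 : 0 ≤ L := Real.logb_nonneg hp1 hq1
  have hLα0 : 0 ≤ α * L := mul_nonneg hα0 hL0
  set d : ℝ := E - α * L with hd
  have hd0 : 0 < d := by rw [hd]; linarith
  obtain ⟨m₁, hm₁⟩ := exists_m1 hp (Rmax p r) d hd0
  refine ⟨p^(m₁), fun N hN hgood => ?_⟩
  have hN0 : 0 < N := lt_of_lt_of_le (by positivity) hN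
  have hN1 : (1:ℝ) ≤ N := by exact_mod_cast hN0
  have hNR0 : (0:ℝ) < N := by exact_mod_cast hN0
  set m := Nat.log p N with hm
  have hmm1 : m₁ ≤ m := (Nat.le_log_iff_pow_le (by omega) (by omega)).2 hN
  have hpmN : p^m ≤ N := Nat.pow_log_le_self p (by omega)
  have hNpm : N < p^(m+1) := Nat.lt_pow_succ_log_self (by omega) N
  obtain ⟨k, hk⟩ := TC_iter hp hr1 hr2 hr3 C hC m N
  refine ⟨k, ?_⟩
  rw [← hk]
  set a := acount p q r m N with ha
  set R : ℕ := Rmax p r with hR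
  have haαm : (a:ℝ) ≤ α * m := le_of_lt hgood
  -- bound q^a by rpow
  have hq_eq : (q:ℝ) = (p:ℝ)^L := (Real.rpow_logb hp0 (by linarith) hq0).symm
  have hqa : ((q:ℝ)^a : ℝ) ≤ (p:ℝ)^(α * L * m) := by
    have h1 : (q:ℝ)^a = (q:ℝ)^((a:ℕ):ℝ) := (Real.rpow_natCast _ _).symm
    have h2 : (q:ℝ)^((a:ℕ):ℝ) ≤ (q:ℝ)^(α * m) :=
      Real.rpow_le_rpow_of_exponent_le hq1 haαm
    have h3 : (q:ℝ)^(α * (m:ℝ)) = (p:ℝ)^(α * L * m) := by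
      rw [hq_eq, ← Real.rpow_mul hp0.le]
      ring_nf
    rw [h1, ← h3]
    exact h2
  have hNLα : (0:ℝ) ≤ (N:ℝ)^(α*L) := Real.rpow_nonneg hNR0.le _
  -- main term
  have hmain : (q:ℝ)^a * N / (p:ℝ)^m ≤ (p:ℝ) * (N:ℝ)^(α*L) := by
    have hpm0 : (0:ℝ) < (p:ℝ)^m := by positivity
    have h1 : (q:ℝ)^a * N / (p:ℝ)^m ≤ (p:ℝ)^(α*L*m) * N / (p:ℝ)^m := by gcongr
    have h2 : (p:ℝ)^(α*L*m) * N / (p:ℝ)^m = (N:ℝ) * (p:ℝ)^((α*L-1)*m) := by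
      rw [← Real.rpow_natCast (p:ℝ) m, mul_comm ((p:ℝ)^(α*L*(m:ℝ))) (N:ℝ), mul_div_assoc,
        ← Real.rpow_sub hp0]
      congr 1
      ring
    have hβ' : α*L - 1 < 0 := by linarith
    have h3 : (p:ℝ)^((α*L-1)*m) ≤ (N:ℝ)^(α*L-1) * (p:ℝ)^(1 - α*L) := by
      have he : (α*L-1)*(m:ℝ) = (α*L-1)*((m:ℝ)+1) + (1 - α*L) := by ring
      rw [he, Real.rpow_add hp0]
      gcongr
      have h4 : (p:ℝ)^((α*L-1)*((m:ℝ)+1)) = ((p:ℝ)^((m:ℝ)+1))^(α*L-1) := by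
        rw [← Real.rpow_mul hp0.le]
        ring_nf
      rw [h4]
      apply Real.rpow_le_rpow_of_nonpos hNR0 ?_ (by linarith)
      have : (N:ℝ) < (p:ℝ)^(m+1 : ℕ) := by exact_mod_cast hNpm
      rw [← Real.rpow_natCast (p:ℝ) (m+1)] at this
      push_cast at this ⊢
      linarith
    have h5 : (p:ℝ)^(1-α*L) ≤ (p:ℝ) := by
      calc (p:ℝ)^(1-α*L) ≤ (p:ℝ)^(1:ℝ) := Real.rpow_le_rpow_of_exponent_le hp1.le (by linarith)
        _ = p := Real.rpow_one _
    calc (q:ℝ)^a * N / (p:ℝ)^m ≤ (p:ℝ)^(α*L*m) * N / (p:ℝ)^m := h1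
      _ = (N:ℝ) * (p:ℝ)^((α*L-1)*m) := h2
      _ ≤ (N:ℝ) * ((N:ℝ)^(α*L-1) * (p:ℝ)^(1-α*L)) := by
          apply mul_le_mul_of_nonneg_left h3 hNR0.le
      _ ≤ (N:ℝ) * ((N:ℝ)^(α*L-1) * (p:ℝ)) := by
          have := Real.rpow_nonneg hNR0.le (α*L-1)
          apply mul_le_mul_of_nonneg_left (mul_le_mul_of_nonneg_left h5 this) hNR0.le
      _ = (p:ℝ) * ((N:ℝ)^(1:ℝ) * (N:ℝ)^(α*L-1)) := by rw [Real.rpow_one]; ring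
      _ = (p:ℝ) * (N:ℝ)^(α*L) := by rw [← Real.rpow_add hNR0]; ring_nf
  -- second term
  have hsecond : (m:ℝ) * R * (q:ℝ)^a ≤ (m:ℝ) * R * (N:ℝ)^(α*L) := by
    have h1 : (p:ℝ)^(α*L*m) ≤ (N:ℝ)^(α*L) := by
      have h2 : (p:ℝ)^(α*L*(m:ℝ)) = ((p:ℝ)^(m:ℝ))^(α*L) := by
        rw [← Real.rpow_mul hp0.le]; ring_nf
      rw [h2]
      apply Real.rpow_le_rpow (by positivity) ?_ hLα0
      rw [Real.rpow_natCast]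
      exact_mod_cast hpmN
    have h0 : (0:ℝ) ≤ (m:ℝ) * R := by positivity
    calc (m:ℝ) * R * (q:ℝ)^a ≤ (m:ℝ) * R * (p:ℝ)^(α*L*m) := by
          apply mul_le_mul_of_nonneg_left hqa h0
      _ ≤ (m:ℝ) * R * (N:ℝ)^(α*L) := mul_le_mul_of_nonneg_left h1 h0
  -- combine
  have hTval := Tval hp hq (r := r) m N
  have hcomb : (((Tmap p q r)^[m] N : ℕ) : ℝ) ≤ ((p:ℝ) + m * R) * (N:ℝ)^(α*L) := by
    calc (((Tmap p q r)^[m] N : ℕ) : ℝ)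
        ≤ (q:ℝ)^a * N / (p:ℝ)^m + (m:ℝ) * R * (q:ℝ)^a := hTval
      _ ≤ (p:ℝ) * (N:ℝ)^(α*L) + (m:ℝ) * R * (N:ℝ)^(α*L) := add_le_add hmain hsecond
      _ = ((p:ℝ) + m * R) * (N:ℝ)^(α*L) := by ring
  have hfin : ((p:ℝ) + m * R) * (N:ℝ)^(α*L) < (N:ℝ)^E := by
    have h1 : (p:ℝ) + m * R < ((p:ℝ)^(d:ℝ))^m := hm₁ m hmm1
    have h2 : ((p:ℝ)^(d:ℝ))^m ≤ (N:ℝ)^d := by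
      have h3 : ((p:ℝ)^(d:ℝ))^m = ((p:ℝ)^(m:ℝ))^d := by
        rw [← Real.rpow_natCast ((p:ℝ)^(d:ℝ)) m, ← Real.rpow_mul hp0.le,
          ← Real.rpow_mul hp0.le]
        ring_nf
      rw [h3]
      apply Real.rpow_le_rpow (by positivity) ?_ hd0.le
      rw [Real.rpow_natCast]
      exact_mod_cast hpmN
    have hNE : (N:ℝ)^E = (N:ℝ)^d * (N:ℝ)^(α*L) := by
      rw [← Real.rpow_add hNR0]
      congr 1
      rw [hd]; ring
    rw [hNE]
    have hNLα' : 0 < (N:ℝ)^(α*L) := Real.rpow_pos_of_pos hNR0 _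
    have : (p:ℝ) + m * R < (N:ℝ)^d := lt_of_lt_of_le h1 h2
    exact mul_lt_mul_of_pos_right this hNLα'
  exact lt_of_le_of_lt hcomb hfin

end K

set_option maxHeartbeats 1000000 in
/-- Korec-type theorem: under (a), (b), (c) and `r ≥ 0`, for every `c > 0` the set
`{N : C_min(N) < N^{γ+c}}`, with `γ = ((p-1)/p) log_p q`, has natural density 1. -/
theorem stmt11 (p q : ℕ) (hp : 2 ≤ p) (hq : 2 ≤ q) (hpq : Nat.Coprime p q)
    (hq' : (q : ℝ) < (p : ℝ) ^ ((p : ℝ) / ((p : ℝ) - 1)))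
    (r : ℕ → ℤ) (hr1 : ∀ j, 1 ≤ j → j < p → 1 ≤ q * j + r j)
    (hr2 : ∀ j, 1 ≤ j → j < p → (p : ℤ) ∣ q * j + r j)
    (hr3 : ∀ j, 1 ≤ j → j < p → 0 ≤ r j)
    (C : ℕ → ℕ)
    (hC : ∀ N, C N = if N % p = 0 then N / p else ((q * N : ℤ) + r (N % p)).toNat)
    (c : ℝ) (hc : 0 < c) :
    Filter.Tendsto (fun x : ℕ =>
      (((Finset.Icc 1 x).filter (fun N =>
          ∃ k, (C^[k] N : ℝ) < (N : ℝ) ^ (((p : ℝ) - 1) / p * Real.logb p q + c))).card : ℝ) / x)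
      Filter.atTop (nhds 1) := by
  have hp1 : (1:ℝ) < p := by exact_mod_cast (by omega : 1 < p)
  have hq1 : (1:ℝ) < q := by exact_mod_cast (by omega : 1 < q)
  have hp0 : (0:ℝ) < p := by positivity
  set L : ℝ := Real.logb p q with hLdef
  have hL0 : 0 < L := Real.logb_pos hp1 hq1
  set γ : ℝ := ((p:ℝ)-1)/p * L with hγdef
  have hγ0 : 0 ≤ γ := by
    apply mul_nonneg _ hL0.le
    apply div_nonneg (by linarith) hp0.le
  have hγ1 : γ < 1 := by
    have hLlt : L < (p:ℝ)/((p:ℝ)-1) :=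
      (Real.logb_lt_iff_lt_rpow hp1 (by positivity)).2 hq'
    rw [hγdef]
    have hpm1 : (0:ℝ) < (p:ℝ)-1 := by linarith
    rw [div_mul_eq_mul_div, div_lt_one hp0]
    calc ((p:ℝ)-1) * L < ((p:ℝ)-1) * ((p:ℝ)/((p:ℝ)-1)) := by
          exact mul_lt_mul_of_pos_left hLlt hpm1
      _ = p := by field_simp
  set E : ℝ := ((p:ℝ)-1)/p * L + c with hEdef
  set ε : ℝ := min (c/(2*L)) ((1-γ)/(2*L)) with hεdef
  have hε0 : 0 < ε := by
    have h1 : 0 < c/(2*L) := div_pos hc (by linarith)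
    have h2 : 0 < (1-γ)/(2*L) := div_pos (by linarith) (by linarith)
    exact lt_min h1 h2
  set α : ℝ := ((p:ℝ)-1)/p + ε with hαdef
  have hα0 : 0 ≤ α := by
    have h1 : (0:ℝ) ≤ ((p:ℝ)-1)/p := div_nonneg (by linarith) hp0.le
    rw [hαdef]
    linarith
  have hαgt : ((p:ℝ)-1)/p < α := by rw [hαdef]; linarith
  have hεL1 : ε * L ≤ c/2 := by
    have h1 : ε ≤ c/(2*L) := min_le_left _ _
    calc ε * L ≤ (c/(2*L)) * L := mul_le_mul_of_nonneg_right h1 hL0.le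
      _ = c/2 := by field_simp
  have hεL2 : ε * L ≤ (1-γ)/2 := by
    have h1 : ε ≤ (1-γ)/(2*L) := min_le_right _ _
    calc ε * L ≤ ((1-γ)/(2*L)) * L := mul_le_mul_of_nonneg_right h1 hL0.le
      _ = (1-γ)/2 := by field_simp
  have hαL : α * L = γ + ε * L := by rw [hαdef, hγdef]; ring
  have hαLE : α * L < E := by rw [hαL, hEdef, ← hγdef]; linarith
  have hαL1 : α * L < 1 := by rw [hαL]; linarith
  -- choose t and s
  obtain ⟨t, ht1, hts⟩ := exists_t hp α hαgt
  have ht0 : (0:ℝ) < t := by linarith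
  have htα0 : (0:ℝ) < t^α := Real.rpow_pos_of_pos ht0 _
  set s : ℝ := (1 + ((p:ℝ)-1)*t)/(t^α) with hsdef
  have hs0 : 0 < s := by
    apply div_pos _ htα0
    nlinarith
  have hsp : s < p := by
    rw [hsdef, div_lt_iff₀ htα0]
    linarith
  set ρ : ℝ := s/p with hρdef
  have hρ0 : 0 ≤ ρ := by positivity
  have hρ1 : ρ < 1 := by rw [hρdef, div_lt_one hp0]; exact hsp
  have hBad : ∀ n : ℕ, ((BadSet p q r α n).card : ℝ) ≤ s^n := by
    intro n
    have h1 := bad_card hp hq hpq hr2 hr3 α t ht1 n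
    have h2 : (0:ℝ) < (t^α)^n := by positivity
    rw [hsdef, div_pow, le_div_iff₀ h2]
    exact h1
  -- good implies target
  obtain ⟨N₁, hN₁⟩ := good_implies hp hq hpq hr1 hr2 hr3 C hC α hα0 E hαLE hαL1
  set P : ℕ → Prop := fun N => ∃ k, (C^[k] N : ℝ) < (N:ℝ)^E with hPdef
  set Good : ℕ → Prop := fun N => (acount p q r (Nat.log p N) N : ℝ) < α * (Nat.log p N : ℝ)
    with hGdef
  -- counting bad elements
  have hbadcount : ∀ x : ℕ, 1 ≤ x → ∀ m₀ : ℕ,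
      (((Finset.Icc 1 x).filter (fun N => ¬ Good N)).card : ℝ) ≤
        (p:ℝ) * ((m₀:ℝ)*(1+s)^m₀ + 2*ρ^m₀*(x:ℝ)) := by
    intro x hx m₀
    set M := Nat.log p x with hM
    have hsub : (Finset.Icc 1 x).filter (fun N => ¬ Good N) ⊆
        (Finset.range (M+1)).biUnion (fun m => (Finset.Ico (p^m) (p^(m+1))).filter
          (fun N => α * (m:ℝ) ≤ (acount p q r m N : ℝ))) := by
      intro N hN
      rw [Finset.mem_filter, Finset.mem_Icc] at hN
      obtain ⟨⟨hN1, hN2⟩, hN3⟩ := hN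
      rw [Finset.mem_biUnion]
      refine ⟨Nat.log p N, ?_, ?_⟩
      · rw [Finset.mem_range]
        have := Nat.log_mono_right (b := p) hN2
        omega
      · rw [Finset.mem_filter, Finset.mem_Ico]
        refine ⟨⟨Nat.pow_log_le_self p (by omega), Nat.lt_pow_succ_log_self (by omega) N⟩, ?_⟩
        simp only [hGdef] at hN3
        exact not_lt.1 hN3
    have hcard1 : (((Finset.Icc 1 x).filter (fun N => ¬ Good N)).card : ℝ) ≤
        ∑ m ∈ Finset.range (M+1), ((p:ℝ) * s^m) := by
      calc (((Finset.Icc 1 x).filter (fun N => ¬ Good N)).card : ℝ)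
          ≤ (((Finset.range (M+1)).biUnion (fun m => (Finset.Ico (p^m) (p^(m+1))).filter
            (fun N => α * (m:ℝ) ≤ (acount p q r m N : ℝ)))).card : ℝ) := by
            exact_mod_cast Finset.card_le_card hsub
        _ ≤ ((∑ m ∈ Finset.range (M+1), ((Finset.Ico (p^m) (p^(m+1))).filter
            (fun N => α * (m:ℝ) ≤ (acount p q r m N : ℝ))).card : ℕ) : ℝ) := by
            exact_mod_cast Finset.card_biUnion_le
        _ ≤ ∑ m ∈ Finset.range (M+1), ((p:ℝ) * s^m) := by
            push_cast
            apply Finset.sum_le_sum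
            intro m _
            calc ((((Finset.Ico (p^m) (p^(m+1))).filter
                (fun N => α * (m:ℝ) ≤ (acount p q r m N : ℝ))).card : ℝ))
                ≤ ((p * (BadSet p q r α m).card : ℕ) : ℝ) := by
                  exact_mod_cast block_bad hp hr2 hr3 α m
              _ = (p:ℝ) * ((BadSet p q r α m).card : ℝ) := by push_cast; ring
              _ ≤ (p:ℝ) * s^m := by
                  exact mul_le_mul_of_nonneg_left (hBad m) hp0.le
    -- split the sum
    have hsplit : ∑ m ∈ Finset.range (M+1), s^m ≤ (m₀:ℝ)*(1+s)^m₀ + 2*ρ^m₀*(x:ℝ) := by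
      rw [← Finset.sum_filter_add_sum_filter_not (Finset.range (M+1)) (fun m => m < m₀)]
      have hhead : ∑ m ∈ (Finset.range (M+1)).filter (fun m => m < m₀), s^m
          ≤ (m₀:ℝ)*(1+s)^m₀ := by
        calc ∑ m ∈ (Finset.range (M+1)).filter (fun m => m < m₀), s^m
            ≤ ∑ _m ∈ (Finset.range (M+1)).filter (fun m => m < m₀), (1+s)^m₀ := by
              apply Finset.sum_le_sum
              intro m hm
              rw [Finset.mem_filter] at hm
              calc s^m ≤ (1+s)^m := by
                    apply pow_le_pow_left₀ hs0.le (by linarith)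
                _ ≤ (1+s)^m₀ := by
                    apply pow_le_pow_right₀ (by linarith) (le_of_lt hm.2)
          _ = (((Finset.range (M+1)).filter (fun m => m < m₀)).card : ℝ) * (1+s)^m₀ := by
              rw [Finset.sum_const, nsmul_eq_mul]
          _ ≤ (m₀:ℝ)*(1+s)^m₀ := by
              apply mul_le_mul_of_nonneg_right _ (by positivity)
              have : ((Finset.range (M+1)).filter (fun m => m < m₀)) ⊆ Finset.range m₀ := by
                intro m hm
                rw [Finset.mem_filter] at hm
                rw [Finset.mem_range]
                exact hm.2
              have h2 := Finset.card_le_card this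
              rw [Finset.card_range] at h2
              exact_mod_cast h2
      have htail : ∑ m ∈ (Finset.range (M+1)).filter (fun m => ¬ m < m₀), s^m
          ≤ 2*ρ^m₀*(x:ℝ) := by
        have hsm : ∀ m ∈ (Finset.range (M+1)).filter (fun m => ¬ m < m₀),
            s^m ≤ ρ^m₀ * (p:ℝ)^m := by
          intro m hm
          rw [Finset.mem_filter, not_lt] at hm
          have h1 : ρ^m * (p:ℝ)^m = s^m := by
            rw [hρdef, div_pow, div_mul_cancel₀ _ (by positivity : ((p:ℝ)^m) ≠ 0)]
          rw [← h1]
          apply mul_le_mul_of_nonneg_right _ (by positivity)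
          exact pow_le_pow_of_le_one hρ0 hρ1.le hm.2
        calc ∑ m ∈ (Finset.range (M+1)).filter (fun m => ¬ m < m₀), s^m
            ≤ ∑ m ∈ (Finset.range (M+1)).filter (fun m => ¬ m < m₀), ρ^m₀ * (p:ℝ)^m :=
              Finset.sum_le_sum hsm
          _ ≤ ∑ m ∈ Finset.range (M+1), ρ^m₀ * (p:ℝ)^m := by
              apply Finset.sum_le_sum_of_subset_of_nonneg (Finset.filter_subset _ _)
              intro m _ _
              positivity
          _ = ρ^m₀ * ∑ m ∈ Finset.range (M+1), (p:ℝ)^m := by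
              rw [Finset.mul_sum]
          _ ≤ ρ^m₀ * (2 * (p:ℝ)^M) := by
              apply mul_le_mul_of_nonneg_left _ (by positivity)
              have := geom_nat_le p M hp
              calc ∑ m ∈ Finset.range (M+1), (p:ℝ)^m
                  = ((∑ m ∈ Finset.range (M+1), p^m : ℕ) : ℝ) := by push_cast; rfl
                _ ≤ ((2 * p^M : ℕ) : ℝ) := by exact_mod_cast this
                _ = 2 * (p:ℝ)^M := by push_cast; ring
          _ ≤ ρ^m₀ * (2 * (x:ℝ)) := by
              apply mul_le_mul_of_nonneg_left _ (by positivity)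
              have : p^M ≤ x := Nat.pow_log_le_self p (by omega)
              have h2 : ((p:ℝ))^M ≤ (x:ℝ) := by exact_mod_cast this
              linarith
          _ = 2*ρ^m₀*(x:ℝ) := by ring
      linarith
    calc (((Finset.Icc 1 x).filter (fun N => ¬ Good N)).card : ℝ)
        ≤ ∑ m ∈ Finset.range (M+1), ((p:ℝ) * s^m) := hcard1
      _ = (p:ℝ) * ∑ m ∈ Finset.range (M+1), s^m := by rw [Finset.mul_sum]
      _ ≤ (p:ℝ) * ((m₀:ℝ)*(1+s)^m₀ + 2*ρ^m₀*(x:ℝ)) :=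
          mul_le_mul_of_nonneg_left hsplit hp0.le
  -- main convergence
  rw [Metric.tendsto_atTop]
  intro δ hδ
  -- choose m₀
  have hρlim : Filter.Tendsto (fun n : ℕ => ρ^n) Filter.atTop (nhds 0) :=
    tendsto_pow_atTop_nhds_zero_of_lt_one hρ0 hρ1
  obtain ⟨m₀, hm₀⟩ := (hρlim.eventually (eventually_lt_nhds
    (show (0:ℝ) < δ/(8*(p:ℝ)+1) by positivity))).exists
  set K : ℝ := (N₁ : ℝ) + (p:ℝ) * ((m₀:ℝ)*(1+s)^m₀) with hKdef
  have hKlim : Filter.Tendsto (fun x : ℕ => K/(x:ℝ)) Filter.atTop (nhds 0) :=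
    tendsto_const_div_atTop_nhds_zero_nat K
  obtain ⟨X₀, hX₀⟩ := Filter.eventually_atTop.1 (hKlim.eventually (eventually_lt_nhds
    (show (0:ℝ) < δ/4 by positivity)))
  refine ⟨max X₀ 1, fun x hx => ?_⟩
  have hx1 : 1 ≤ x := le_trans (le_max_right _ _) hx
  have hxX : X₀ ≤ x := le_trans (le_max_left _ _) hx
  have hx0 : (0:ℝ) < x := by exact_mod_cast hx1
  -- counting
  set cardP := ((Finset.Icc 1 x).filter P).card with hcardP
  set cardN := ((Finset.Icc 1 x).filter (fun N => ¬ P N)).card with hcardN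
  have hsum : cardP + cardN = x := by
    rw [hcardP, hcardN, Finset.card_filter_add_card_filter_not, Nat.card_Icc]
    omega
  have hNsub : (Finset.Icc 1 x).filter (fun N => ¬ P N) ⊆
      Finset.range N₁ ∪ (Finset.Icc 1 x).filter (fun N => ¬ Good N) := by
    intro N hN
    rw [Finset.mem_filter] at hN
    obtain ⟨hmem, hnP⟩ := hN
    rw [Finset.mem_union, Finset.mem_range, Finset.mem_filter]
    by_cases h1 : N₁ ≤ N
    · right
      refine ⟨hmem, fun hg => hnP ?_⟩
      exact hN₁ N h1 hg
    · left; omega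
  have hcardNbound : (cardN : ℝ) ≤ (N₁ : ℝ) +
      (p:ℝ) * ((m₀:ℝ)*(1+s)^m₀ + 2*ρ^m₀*(x:ℝ)) := by
    have h1 : cardN ≤ N₁ + ((Finset.Icc 1 x).filter (fun N => ¬ Good N)).card := by
      calc cardN ≤ (Finset.range N₁ ∪ (Finset.Icc 1 x).filter (fun N => ¬ Good N)).card :=
            Finset.card_le_card hNsub
        _ ≤ N₁ + ((Finset.Icc 1 x).filter (fun N => ¬ Good N)).card := by
            calc _ ≤ (Finset.range N₁).card + ((Finset.Icc 1 x).filter (fun N => ¬ Good N)).card :=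
                  Finset.card_union_le _ _
              _ = N₁ + _ := by rw [Finset.card_range]
    calc (cardN : ℝ) ≤ (N₁ : ℝ) + (((Finset.Icc 1 x).filter (fun N => ¬ Good N)).card : ℝ) := by
          exact_mod_cast h1
      _ ≤ (N₁ : ℝ) + (p:ℝ) * ((m₀:ℝ)*(1+s)^m₀ + 2*ρ^m₀*(x:ℝ)) := by
          linarith [hbadcount x hx1 m₀]
  have hKx : K/(x:ℝ) < δ/4 := hX₀ x hxX
  have hρm : 2*(p:ℝ)*ρ^m₀ < δ/4 := by
    have h1 : ρ^m₀ < δ/(8*(p:ℝ)+1) := hm₀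
    have h2 : 2*(p:ℝ)*(δ/(8*(p:ℝ)+1)) ≤ δ/4 := by
      rw [mul_div_assoc', div_le_div_iff₀ (by positivity) (by norm_num)]
      nlinarith
    nlinarith [hp0]
  have hcardNreal : (cardN : ℝ) ≤ K + (δ/4)*(x:ℝ) := by
    have h2 : (p:ℝ) * (2*ρ^m₀*(x:ℝ)) ≤ (δ/4)*(x:ℝ) := by
      have : (p:ℝ) * (2*ρ^m₀) = 2*(p:ℝ)*ρ^m₀ := by ring
      nlinarith
    calc (cardN : ℝ) ≤ (N₁ : ℝ) + (p:ℝ) * ((m₀:ℝ)*(1+s)^m₀ + 2*ρ^m₀*(x:ℝ)) := hcardNbound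
      _ = K + (p:ℝ) * (2*ρ^m₀*(x:ℝ)) := by rw [hKdef]; ring
      _ ≤ K + (δ/4)*(x:ℝ) := by linarith
  have hcardPx : (cardP : ℝ) = (x:ℝ) - cardN := by
    have : (cardP : ℝ) + cardN = x := by exact_mod_cast hsum
    linarith
  have hfrac_le : (cardP : ℝ)/x ≤ 1 := by
    rw [div_le_one hx0]
    have : cardP ≤ x := by omega
    exact_mod_cast this
  have hfrac_ge : 1 - δ/2 ≤ (cardP : ℝ)/x := by
    rw [hcardPx, sub_div, div_self (ne_of_gt hx0)]
    have h1 : (cardN : ℝ)/x ≤ K/x + δ/4 := by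
      rw [div_le_iff₀ hx0]
      calc (cardN : ℝ) ≤ K + (δ/4)*(x:ℝ) := hcardNreal
        _ = (K/x + δ/4)*x := by field_simp
    have h2 : (cardN : ℝ)/x ≤ δ/2 := by linarith
    linarith
  rw [Real.dist_eq, abs_sub_lt_iff]
  constructor <;> linarith
end

section
/- Let p ≥ 2, δ > (p-1)/p, and for m ∈ ℕ let U(m,δ) ∩ [M, p^m + M) be counted where U(m,δ) = {N ∈ ℕ : #{k ≤ m−1 : C̃^k(N) ≢ 0 mod p} ≤ δm} for the map C̃(N) = N/p if p∣N, else (qN + r(N mod p))/p (under the assumptions gcd(p,q)=1, p ∣ qj+r(j), qj+r(j) ≥ 1). Then #(U(m,δ) ∩ [M, p^m + M)) = Σ_{k=0}^{⌊mδ⌋} C(m,k)(p−1)^k for every M ∈ ℕ, and hence #(U(m,δ) ∩ [M, p^m+M)) = (1 + o_m(1))·p^m. -/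
/-!
Since `p * C̃ N` is `N` or `q * N + r (N % p)`, an affine function of `N` with slope prime to
`p` that depends only on `N % p`, the residues `N mod p` and `C̃ N mod p ^ m` determine
`N mod p ^ (m + 1)`. By induction the residues of `N, C̃ N, …, C̃^[m-1] N` mod `p` determine
`N mod p ^ m`, so they biject any `p ^ m` consecutive integers onto `(ZMod p)^m`, and counting
vectors by Hamming weight gives the exact formula. The asymptotic is a Chernoff bound with
`s = p - 1`: for `x ≥ 1` the tail `∑_{k ≥ δm} C(m,k) s^k` is at most `(s x + 1)^m / x^(δm)`,
and `δ > s / (s + 1)` lets one pick `x > 1` with `s x + 1 < (s + 1) x^δ`.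
-/

open Finset Filter Topology

section HammingCount

variable {ι α : Type*} [Fintype ι] [DecidableEq ι] [Fintype α] [DecidableEq α] [Zero α]

lemma card_filter_support_eq (A : Finset ι) :
    #{v : ι → α | ({i | v i ≠ 0} : Finset ι) = A} = (Fintype.card α - 1) ^ #A := by
  have hpi : ({v : ι → α | ({i | v i ≠ 0} : Finset ι) = A} : Finset (ι → α)) =
      Fintype.piFinset fun i => if i ∈ A then ({0}ᶜ : Finset α) else {0} := by
    ext v
    simp only [mem_filter, mem_univ, true_and, Fintype.mem_piFinset, Finset.ext_iff]
    refine forall_congr' fun i => ?_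
    split_ifs with hi <;> simp [hi]
  rw [hpi, Fintype.card_piFinset]
  simp [apply_ite Finset.card, card_compl, prod_ite_mem]

lemma card_hammingNorm_eq (j : ℕ) :
    #{v : ι → α | hammingNorm v = j} =
      (Fintype.card ι).choose j * (Fintype.card α - 1) ^ j := by
  rw [card_eq_sum_card_fiberwise (f := fun v => ({i | v i ≠ 0} : Finset ι))
    (t := powersetCard j univ) fun v hv => by simpa [hammingNorm] using hv]
  have hfiber : ∀ A ∈ powersetCard j (univ : Finset ι),
      #{v ∈ {v : ι → α | hammingNorm v = j} | ({i | v i ≠ 0} : Finset ι) = A} =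
        (Fintype.card α - 1) ^ j := by
    intro A hA
    rw [mem_powersetCard] at hA
    rw [← hA.2, ← card_filter_support_eq, filter_filter]
    congr 1
    refine filter_congr fun v _ => ?_
    simp only [hammingNorm]
    constructor
    · exact And.right
    · rintro rfl; exact ⟨rfl, rfl⟩
  rw [sum_congr rfl hfiber, sum_const, card_powersetCard, card_univ, smul_eq_mul]

lemma card_hammingNorm_le (t : ℕ) :
    #{v : ι → α | hammingNorm v ≤ t} =
      ∑ j ∈ range (t + 1), (Fintype.card ι).choose j * (Fintype.card α - 1) ^ j := by
  rw [card_eq_sum_card_fiberwise (f := hammingNorm) (t := range (t + 1))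
    fun v hv => by simpa [Nat.lt_succ_iff] using hv]
  refine sum_congr rfl fun j hj => ?_
  rw [← card_hammingNorm_eq, filter_filter]
  congr 1
  refine filter_congr fun v _ => ?_
  simp only [mem_range] at hj
  constructor
  · exact And.right
  · rintro rfl; exact ⟨by omega, rfl⟩

end HammingCount

section ResidueVector

variable {p : ℕ} {T : ℕ → ℕ}

def residueVector (p : ℕ) (T : ℕ → ℕ) (m N : ℕ) : Fin m → ZMod p :=
  fun k => (T^[k] N : ZMod p)

lemma hammingNorm_residueVector (m N : ℕ) :
    hammingNorm (residueVector p T m N) = #{k ∈ range m | T^[k] N % p ≠ 0} := by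
  rw [hammingNorm, card_filter, card_filter, ← Fin.sum_univ_eq_sum_range]
  simp [residueVector, ZMod.natCast_eq_zero_iff, Nat.dvd_iff_mod_eq_zero]

lemma modEq_pow_of_iterate_modEq
    (hT : ∀ m N N', N ≡ N' [MOD p] → T N ≡ T N' [MOD p ^ m] → N ≡ N' [MOD p ^ (m + 1)])
    (m : ℕ) : ∀ N N', (∀ k < m, T^[k] N ≡ T^[k] N' [MOD p]) → N ≡ N' [MOD p ^ m] := by
  induction m with
  | zero => simp [Nat.modEq_one]
  | succ m ih =>
    intro N N' h
    exact hT m N N' (h 0 m.succ_pos) (ih _ _ fun k hk => h (k + 1) (by omega))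

lemma injOn_residueVector
    (hT : ∀ m N N', N ≡ N' [MOD p] → T N ≡ T N' [MOD p ^ m] → N ≡ N' [MOD p ^ (m + 1)])
    (m M : ℕ) : Set.InjOn (residueVector p T m) (Ico M (p ^ m + M) : Set ℕ) := by
  intro N hN N' hN' h
  simp only [coe_Ico, Set.mem_Ico] at hN hN'
  have hmod : N ≡ N' [MOD p ^ m] := modEq_pow_of_iterate_modEq hT m N N' fun k hk =>
    (ZMod.natCast_eq_natCast_iff _ _ _).1 (congrFun h ⟨k, hk⟩)
  exact hmod.eq_of_abs_lt (by rw [abs_lt]; omega)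

lemma card_filter_residueVector [NeZero p]
    (hT : ∀ m N N', N ≡ N' [MOD p] → T N ≡ T N' [MOD p ^ m] → N ≡ N' [MOD p ^ (m + 1)])
    (m M : ℕ) (P : (Fin m → ZMod p) → Prop) [DecidablePred P] :
    #{N ∈ Ico M (p ^ m + M) | P (residueVector p T m N)} = #{v | P v} := by
  have hinj := injOn_residueVector hT m M
  have himage : (Ico M (p ^ m + M)).image (residueVector p T m) = univ := by
    refine eq_univ_of_card _ ?_
    rw [card_image_of_injOn hinj, Nat.card_Ico]
    simp [ZMod.card]
  rw [← himage, filter_image,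
    card_image_of_injOn (hinj.mono (coe_subset.2 (filter_subset _ _)))]

end ResidueVector

section CollatzLike

variable {p q : ℕ} {r : ℕ → ℤ}

def collatzLike (p q : ℕ) (r : ℕ → ℤ) (N : ℕ) : ℕ :=
  if N % p = 0 then N / p else ((q * N : ℤ) + r (N % p)).toNat / p

lemma natCast_mul_collatzLike (hp : 0 < p) (hr1 : ∀ j, 1 ≤ j → j < p → 1 ≤ q * j + r j)
    (hr2 : ∀ j, 1 ≤ j → j < p → (p : ℤ) ∣ q * j + r j) (N : ℕ) :
    (p : ℤ) * collatzLike p q r N = if N % p = 0 then (N : ℤ) else q * N + r (N % p) := by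
  have hN : (N : ℤ) = p * (N / p : ℕ) + (N % p : ℕ) := by
    exact_mod_cast (Nat.div_add_mod N p).symm
  unfold collatzLike
  split_ifs with h
  · rw [h, Nat.cast_zero, add_zero] at hN
    rw [hN]
  · have hj1 : 1 ≤ N % p := Nat.one_le_iff_ne_zero.2 h
    have hjp : N % p < p := Nat.mod_lt N hp
    have hsplit : (q * N : ℤ) + r (N % p) =
        p * (q * (N / p : ℕ)) + (q * (N % p : ℕ) + r (N % p)) := by
      rw [hN]; ring
    have hnonneg : 0 ≤ (q * N : ℤ) + r (N % p) := by
      rw [hsplit]; have := hr1 _ hj1 hjp; positivity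
    have hdvd : (p : ℤ) ∣ (q * N : ℤ) + r (N % p) := by
      rw [hsplit]; exact dvd_add (dvd_mul_right _ _) (hr2 _ hj1 hjp)
    rw [Int.natCast_div, Int.toNat_of_nonneg hnonneg, Int.mul_ediv_cancel' hdvd]

lemma modEq_pow_succ_of_collatzLike_modEq (hp : 0 < p) (hpq : p.Coprime q)
    (hr1 : ∀ j, 1 ≤ j → j < p → 1 ≤ q * j + r j)
    (hr2 : ∀ j, 1 ≤ j → j < p → (p : ℤ) ∣ q * j + r j) (m N N' : ℕ)
    (h : N ≡ N' [MOD p])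
    (hC : collatzLike p q r N ≡ collatzLike p q r N' [MOD p ^ m]) :
    N ≡ N' [MOD p ^ (m + 1)] := by
  set c : ℕ := if N % p = 0 then 1 else q with hc
  have hcop : IsCoprime ((p ^ (m + 1) : ℕ) : ℤ) c := by
    rw [Nat.isCoprime_iff_coprime, hc]
    split_ifs
    exacts [Nat.coprime_one_right _, hpq.pow_left _]
  have hlin :
      (p : ℤ) * collatzLike p q r N' - p * collatzLike p q r N = c * ((N' : ℤ) - N) := by
    rw [natCast_mul_collatzLike hp hr1 hr2, natCast_mul_collatzLike hp hr1 hr2,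
      ← (h : N % p = N' % p), hc]
    split_ifs <;> push_cast <;> ring
  have hdvd : ((p ^ (m + 1) : ℕ) : ℤ) ∣ c * ((N' : ℤ) - N) := by
    rw [← hlin, ← mul_sub, pow_succ', Nat.cast_mul]
    exact mul_dvd_mul_left _ (Nat.modEq_iff_dvd.1 hC)
  exact Nat.modEq_iff_dvd.2 (hcop.dvd_of_dvd_mul_left hdvd)

end CollatzLike

section BinomialTail

variable {s : ℝ}

lemma sum_choose_mul_pow_le (hs : 0 ≤ s) (m : ℕ) (S : Finset ℕ) :
    ∑ k ∈ S, (m.choose k : ℝ) * s ^ k ≤ (s + 1) ^ m := by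
  rw [← sum_filter_of_ne (p := fun k => k ≤ m) fun k _ hk => by
    contrapose! hk; simp [Nat.choose_eq_zero_of_lt hk], add_pow]
  simp_rw [one_pow, mul_one, mul_comm (s ^ _)]
  exact sum_le_sum_of_subset_of_nonneg
    (fun k hk => by simpa [Nat.lt_succ_iff] using (mem_filter.1 hk).2) fun _ _ _ => by positivity

lemma sum_choose_mul_pow_mul_rpow_le (hs : 0 ≤ s) {x : ℝ} (hx : 1 ≤ x) (a : ℝ) (m : ℕ) :
    (∑ k ∈ range (m + 1) with a ≤ ((k : ℕ) : ℝ), (m.choose k : ℝ) * s ^ k) * x ^ a ≤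
      (s * x + 1) ^ m :=
  calc (∑ k ∈ range (m + 1) with a ≤ ((k : ℕ) : ℝ), (m.choose k : ℝ) * s ^ k) * x ^ a
      = ∑ k ∈ range (m + 1) with a ≤ ((k : ℕ) : ℝ), (m.choose k : ℝ) * s ^ k * x ^ a :=
        sum_mul _ _ _
    _ ≤ ∑ k ∈ range (m + 1) with a ≤ ((k : ℕ) : ℝ), (m.choose k : ℝ) * (s * x) ^ k := by
        refine sum_le_sum fun k hk => ?_
        rw [mul_pow, ← mul_assoc, ← Real.rpow_natCast x k]
        gcongr
        exact (mem_filter.1 hk).2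
    _ ≤ (s * x + 1) ^ m := sum_choose_mul_pow_le (by positivity) m _

lemma exists_one_lt_mul_add_one_lt_mul_rpow (hs : 0 ≤ s) {δ : ℝ} (hδ : s / (s + 1) < δ) :
    ∃ x : ℝ, 1 < x ∧ s * x + 1 < (s + 1) * x ^ δ := by
  set f : ℝ → ℝ := fun x => (s + 1) * x ^ δ - (s * x + 1)
  have hf : HasDerivAt f ((s + 1) * δ - s) 1 := by
    refine (((Real.hasDerivAt_rpow_const (p := δ) (Or.inl one_ne_zero)).const_mul (s + 1)).sub
      (((hasDerivAt_id (1 : ℝ)).const_mul s).add_const 1)).congr_deriv ?_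
    simp
  have hpos : 0 < (s + 1) * δ - s := by
    rw [div_lt_iff₀ (by linarith)] at hδ; linarith
  obtain ⟨x, hslope, hx⟩ := ((((hasDerivAt_iff_tendsto_slope.1 hf).mono_left
    (nhdsGT_le_nhdsNE 1)).eventually (eventually_gt_nhds hpos)).and self_mem_nhdsWithin).exists
  exact ⟨x, hx, sub_pos.1 (pos_of_slope_pos (f := f) hx hslope (by simp [f]))⟩

theorem tendsto_sum_range_floor_choose_mul_pow_div (hs : 0 ≤ s) {δ : ℝ}
    (hδ : s / (s + 1) < δ) :
    Tendsto
      (fun m : ℕ => (∑ k ∈ range (⌊δ * m⌋₊ + 1), (m.choose k : ℝ) * s ^ k) / (s + 1) ^ m)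
      atTop (𝓝 1) := by
  obtain ⟨x, hx1, hx⟩ := exists_one_lt_mul_add_one_lt_mul_rpow hs hδ
  -- the Chernoff bound gives `tail ≤ c ^ m * (s + 1) ^ m`
  set c := (s * x + 1) / ((s + 1) * x ^ δ)
  have hc0 : 0 ≤ c := by positivity
  have hc1 : c < 1 := (div_lt_one (by positivity)).2 hx
  refine tendsto_of_tendsto_of_tendsto_of_le_of_le (g := fun m : ℕ => 1 - c ^ m)
    (by simpa using (tendsto_pow_atTop_nhds_zero_of_lt_one hc0 hc1).const_sub 1)
    tendsto_const_nhds (fun m => ?_)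
    fun m => div_le_one_of_le₀ (sum_choose_mul_pow_le hs m _) (by positivity)
  set f : ℕ → ℝ := fun k => (m.choose k : ℝ) * s ^ k
  have hfull : ∑ k ∈ range (m + 1), f k = (s + 1) ^ m := by
    simp [f, add_pow, mul_comm]
  have hhead : ∑ k ∈ range (m + 1) with ¬ δ * m ≤ ((k : ℕ) : ℝ), f k ≤
      ∑ k ∈ range (⌊δ * m⌋₊ + 1), f k := by
    refine sum_le_sum_of_subset_of_nonneg (fun k hk => ?_) fun _ _ _ => by positivity
    rw [mem_filter, not_le] at hk
    exact mem_range.2 (Nat.lt_succ_of_le (Nat.le_floor hk.2.le))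
  have htail :
      ∑ k ∈ range (m + 1) with δ * m ≤ ((k : ℕ) : ℝ), f k ≤ c ^ m * (s + 1) ^ m := by
    refine le_of_mul_le_mul_right ?_ (by positivity : 0 < x ^ (δ * m))
    calc _ ≤ (s * x + 1) ^ m := sum_choose_mul_pow_mul_rpow_le hs hx1.le (δ * m) m
      _ = c ^ m * (s + 1) ^ m * x ^ (δ * m) := by
        rw [Real.rpow_mul (by linarith), Real.rpow_natCast, div_pow, mul_pow]
        field_simp
  dsimp only
  rw [le_div_iff₀ (by positivity)]
  linarith [sum_filter_add_sum_filter_not (range (m + 1)) (fun k : ℕ => δ * m ≤ (k : ℝ)) f]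

end BinomialTail

theorem stmt12_general (p q : ℕ) (hp : 2 ≤ p) (hpq : Nat.Coprime p q)
    (r : ℕ → ℤ) (hr1 : ∀ j, 1 ≤ j → j < p → 1 ≤ q * j + r j)
    (hr2 : ∀ j, 1 ≤ j → j < p → (p : ℤ) ∣ q * j + r j)
    (Ct : ℕ → ℕ)
    (hCt : ∀ N, Ct N = if N % p = 0 then N / p else ((q * N : ℤ) + r (N % p)).toNat / p)
    (δ : ℝ) (hδ : ((p : ℝ) - 1) / p < δ)
    (U : ℕ → ℕ → Finset ℕ)
    (hU : ∀ m M, U m M = (Finset.Ico M (p ^ m + M)).filter (fun N =>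
      (((Finset.range m).filter (fun k => Ct^[k] N % p ≠ 0)).card : ℝ) ≤ δ * m)) :
    (∀ m M : ℕ,
      (U m M).card = ∑ k ∈ Finset.range (⌊δ * m⌋₊ + 1), Nat.choose m k * (p - 1) ^ k) ∧
    (∀ M : ℕ → ℕ, Filter.Tendsto (fun m : ℕ => ((U m (M m)).card : ℝ) / (p : ℝ) ^ m)
      Filter.atTop (nhds 1)) := by
  obtain rfl : Ct = collatzLike p q r := funext hCt
  have : NeZero p := ⟨by omega⟩
  have hs : (0 : ℝ) ≤ p - 1 := by
    rw [sub_nonneg]; exact_mod_cast (by omega : 1 ≤ p)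
  have hδm (m : ℕ) : 0 ≤ δ * m :=
    mul_nonneg ((div_nonneg hs (by positivity)).trans hδ.le) m.cast_nonneg
  have hcard (m M : ℕ) :
      #(U m M) = ∑ k ∈ range (⌊δ * m⌋₊ + 1), m.choose k * (p - 1) ^ k :=
    calc #(U m M)
        = #{N ∈ Ico M (p ^ m + M) |
            hammingNorm (residueVector p (collatzLike p q r) m N) ≤ ⌊δ * m⌋₊} := by
          simp_rw [hU, hammingNorm_residueVector, Nat.le_floor_iff (hδm m)]
      _ = #{v : Fin m → ZMod p | hammingNorm v ≤ ⌊δ * m⌋₊} :=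
          card_filter_residueVector
            (modEq_pow_succ_of_collatzLike_modEq (by omega) hpq hr1 hr2) m M
            (fun v => hammingNorm v ≤ ⌊δ * m⌋₊)
      _ = _ := by simp [card_hammingNorm_le, ZMod.card]
  refine ⟨hcard, fun M => ?_⟩
  convert tendsto_sum_range_floor_choose_mul_pow_div hs (δ := δ) (by simpa using hδ)
    using 2 with m
  rw [hcard]
  push_cast [Nat.cast_sub (by omega : 1 ≤ p)]
  rw [sub_add_cancel]

/-- Exact count and asymptotic for the set `U(m,δ)` of inputs whose first `m`
iterates under `C̃` have at most `δ m` nonzero residues mod `p`, on any interval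
of length `p^m`. -/
theorem stmt12 (p q : ℕ) (hp : 2 ≤ p) (hq : 2 ≤ q) (hpq : Nat.Coprime p q)
    (r : ℕ → ℤ) (hr1 : ∀ j, 1 ≤ j → j < p → 1 ≤ q * j + r j)
    (hr2 : ∀ j, 1 ≤ j → j < p → (p : ℤ) ∣ q * j + r j)
    (Ct : ℕ → ℕ)
    (hCt : ∀ N, Ct N = if N % p = 0 then N / p else ((q * N : ℤ) + r (N % p)).toNat / p)
    (δ : ℝ) (hδ : ((p : ℝ) - 1) / p < δ)
    (U : ℕ → ℕ → Finset ℕ)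
    (hU : ∀ m M, U m M = (Finset.Ico M (p ^ m + M)).filter (fun N =>
      (((Finset.range m).filter (fun k => Ct^[k] N % p ≠ 0)).card : ℝ) ≤ δ * m)) :
    (∀ m M : ℕ,
      (U m M).card = ∑ k ∈ Finset.range (⌊δ * m⌋₊ + 1), Nat.choose m k * (p - 1) ^ k) ∧
    (∀ M : ℕ → ℕ, Filter.Tendsto (fun m : ℕ => ((U m (M m)).card : ℝ) / (p : ℝ) ^ m)
      Filter.atTop (nhds 1)) :=
  stmt12_general p q hp hpq r hr1 hr2 Ct hCt δ hδ U hU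
end

section
/- Let p, q ≥ 2 be coprime, r : {1,...,p-1} → ℤ with qj + r(j) ≥ 1 and p ∣ (qj + r(j)). Suppose M ∈ ℕ \ pℕ, a ∈ ℕ^k with all a_i ≥ 1, and R ∈ {r(1),...,r(p-1)}^k satisfy M ≡ F_k(a,R) (mod q^k), where F_k(a,R) = Σ_{i=1}^k q^{k-i} p^{-a_{i,k}} R_i ∈ ℤ[1/p] and a_{i,k} = a_i + ... + a_k. Then N := p^{|a|}(M − F_k(a,R))/q^k is a positive integer not divisible by p (provided it is positive), and it satisfies a^{(k)}(N) = a, R^{(k)}(N) = R, and S^k(N) = M, where S is the Syracuse map. -/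
/-!
Induct on `k`, peeling off the first step. After clearing denominators the hypothesis reads
`p^{|a|} M - p^{|a|} F_k(a,R) = q^k N`, and splitting off `i = 1` turns it into
`p^{a_1} X = q^{k-1} (q N + R_1)`, where `X` is the left-hand side for the shifted data
`(a_2, …, a_k)`, `(R_2, …, R_k)`. As `p` and `q` are coprime, `q N + R_1 = p^{a_1} N'` with
`X = q^{k-1} N'`, so `N'` satisfies the hypothesis for the shifted data. Writing `R_1 = r(j)`,
`p` divides both `q N + r(j)` and `q j + r(j)`, hence `N ≡ j (mod p)`; by induction `p ∤ N'`,
so one Syracuse step sends `N` to `N'` with valuation exactly `a_1`.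
-/

open Finset

def syracuseNum (p q : ℕ) (r : ℕ → ℤ) (N : ℕ) : ℤ := q * N + r (N % p)

/-- `p^{|a|} F_k(a, R)`, with `0`-based indices. -/
def scaledF (p q : ℕ) (av : ℕ → ℕ) (Rv : ℕ → ℤ) (k : ℕ) : ℤ :=
  ∑ i ∈ range k, (q : ℤ) ^ (k - 1 - i) * Rv i * (p : ℤ) ^ (∑ j ∈ range i, av j)

lemma pow_sum_mul_sum_div_eq_scaledF {p : ℕ} (hp : p ≠ 0) (q : ℕ) (av : ℕ → ℕ)
    (Rv : ℕ → ℤ) (k : ℕ) :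
    (p : ℚ) ^ (∑ i ∈ range k, av i) *
        ∑ i ∈ range k, (q : ℚ) ^ (k - 1 - i) * (Rv i : ℚ) / (p : ℚ) ^ (∑ j ∈ Ico i k, av j)
      = scaledF p q av Rv k := by
  rw [scaledF, mul_sum]
  push_cast
  refine sum_congr rfl fun i hi ↦ ?_
  rw [← sum_range_add_sum_Ico _ (mem_range.mp hi).le, pow_add]
  field_simp

lemma scaledF_succ (p q : ℕ) (av : ℕ → ℕ) (Rv : ℕ → ℤ) (k : ℕ) :
    scaledF p q av Rv (k + 1) = (q : ℤ) ^ k * Rv 0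
      + (p : ℤ) ^ av 0 * scaledF p q (fun i ↦ av (i + 1)) (fun i ↦ Rv (i + 1)) k := by
  rw [scaledF, scaledF, sum_range_succ', mul_sum, add_comm]
  congr 1
  · simp
  · refine sum_congr rfl fun i _ ↦ ?_
    rw [show k + 1 - 1 - (i + 1) = k - 1 - i by omega, sum_range_succ' av, pow_add]
    ring

lemma padicValNat_pow_mul {p : ℕ} (hp : 1 < p) (e : ℕ) {n : ℕ} (hn : ¬ p ∣ n) :
    padicValNat p (p ^ e * n) = e := by
  have hn0 : n ≠ 0 := by rintro rfl; exact hn (dvd_zero p)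
  rw [padicValNat_def' hp.ne' (by positivity)]
  refine multiplicity_eq_of_dvd_of_not_dvd (dvd_mul_right _ _) ?_
  rwa [pow_succ, Nat.mul_dvd_mul_iff_left (by positivity)]

section Syracuse

variable {p q : ℕ} {r : ℕ → ℤ} {S : ℕ → ℕ}

lemma syracuse_step (hp : 1 < p)
    (hS : ∀ N, S N = (syracuseNum p q r N).toNat /
      p ^ padicValNat p (syracuseNum p q r N).toNat)
    {N N' e : ℕ} (h : syracuseNum p q r N = (p : ℤ) ^ e * N') (hN' : ¬ p ∣ N') :
    padicValNat p (syracuseNum p q r N).toNat = e ∧ S N = N' := by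
  have hnat : (syracuseNum p q r N).toNat = p ^ e * N' := by rw [h]; exact_mod_cast rfl
  have hval := padicValNat_pow_mul hp e hN'
  refine ⟨hnat ▸ hval, ?_⟩
  rw [hS, hnat, hval, Nat.mul_div_cancel_left _ (by positivity)]

lemma mod_eq_of_dvd (hpq : p.Coprime q) {j : ℕ} (hj : j < p)
    (hrj : (p : ℤ) ∣ q * j + r j) {N : ℕ} (h : (p : ℤ) ∣ q * N + r j) : N % p = j := by
  have hdiff : (p : ℤ) ∣ q * ((N : ℤ) - j) := by
    rw [show (q : ℤ) * (N - j) = (q * N + r j) - (q * j + r j) by ring]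
    exact dvd_sub h hrj
  have hmod : N ≡ j [MOD p] := Int.natCast_modEq_iff.mp
    ((Int.modEq_iff_dvd.mpr ((Nat.isCoprime_iff_coprime.mpr hpq).dvd_of_dvd_mul_left hdiff)).symm)
  rw [hmod, Nat.mod_eq_of_lt hj]

lemma exists_syracuse_pred (hpq : p.Coprime q) {j : ℕ} (hr1j : 1 ≤ q * j + r j)
    (hr2j : (p : ℤ) ∣ q * j + r j) (hj : j < p) {e k N : ℕ} (he : 1 ≤ e) {X : ℤ}
    (hX : (p : ℤ) ^ e * X = (q : ℤ) ^ k * (q * N + r j)) :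
    ∃ N' : ℕ, X = (q : ℤ) ^ k * N' ∧ N % p = j ∧
      syracuseNum p q r N = (p : ℤ) ^ e * N' := by
  obtain ⟨N', hN'⟩ : (p : ℤ) ^ e ∣ q * N + r j :=
    ((Nat.isCoprime_iff_coprime.mpr hpq).pow (n := k)).dvd_of_dvd_mul_left ⟨X, hX.symm⟩
  have hpow : (0 : ℤ) < p ^ e := pow_pos (by omega) e
  have hNj : N % p = j :=
    mod_eq_of_dvd hpq hj hr2j (hN' ▸ dvd_mul_of_dvd_left (dvd_pow_self _ (by omega)) _)
  have hN'pos : 0 < N' := by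
    have hjN : (j : ℤ) ≤ N := by exact_mod_cast hNj ▸ Nat.mod_le N p
    nlinarith
  lift N' to ℕ using hN'pos.le
  refine ⟨N', mul_left_cancel₀ hpow.ne' ?_, hNj, ?_⟩
  · rw [hX, hN']; ring
  · rw [syracuseNum, hNj, hN']

theorem syracuse_iterate_of_scaledF (hp : 1 < p) (hpq : p.Coprime q)
    (hr1 : ∀ j, 1 ≤ j → j < p → 1 ≤ q * j + r j)
    (hr2 : ∀ j, 1 ≤ j → j < p → (p : ℤ) ∣ q * j + r j)
    (hS : ∀ N, S N = (syracuseNum p q r N).toNat /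
      p ^ padicValNat p (syracuseNum p q r N).toNat)
    {M : ℕ} (hMp : ¬ p ∣ M) (k : ℕ) :
    ∀ (av : ℕ → ℕ) (Rv : ℕ → ℤ) (N : ℕ), (∀ i < k, 1 ≤ av i) →
      (∀ i < k, ∃ j, 1 ≤ j ∧ j < p ∧ Rv i = r j) →
      (p : ℤ) ^ (∑ i ∈ range k, av i) * M - scaledF p q av Rv k = (q : ℤ) ^ k * N →
      ¬ p ∣ N ∧
      (∀ i < k, padicValNat p (syracuseNum p q r (S^[i] N)).toNat = av i ∧
        r (S^[i] N % p) = Rv i) ∧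
      S^[k] N = M := by
  induction k with
  | zero =>
    intro av Rv N _ _ hN
    obtain rfl : N = M := by simpa [scaledF] using hN.symm
    exact ⟨hMp, by simp, rfl⟩
  | succ k ih =>
    intro av Rv N hav hRv hN
    obtain ⟨j, hj1, hjp, hRv0⟩ := hRv 0 k.succ_pos
    set X := (p : ℤ) ^ (∑ i ∈ range k, av (i + 1)) * M
      - scaledF p q (fun i ↦ av (i + 1)) (fun i ↦ Rv (i + 1)) k
    have hX : (p : ℤ) ^ av 0 * X = (q : ℤ) ^ k * (q * N + Rv 0) := by
      rw [scaledF_succ, sum_range_succ', add_comm, pow_add] at hN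
      linear_combination hN
    obtain ⟨N', hXN', hNj, hnum⟩ :=
      exists_syracuse_pred hpq (hr1 j hj1 hjp) (hr2 j hj1 hjp) hjp (hav 0 k.succ_pos)
        (hRv0 ▸ hX)
    obtain ⟨hpN', hsteps, hlast⟩ := ih (fun i ↦ av (i + 1)) (fun i ↦ Rv (i + 1)) N'
      (fun i hi ↦ hav (i + 1) (by omega)) (fun i hi ↦ hRv (i + 1) (by omega)) hXN'
    obtain ⟨hval, hSN⟩ := syracuse_step hp hS hnum hpN'
    refine ⟨fun hpN ↦ by rw [Nat.dvd_iff_mod_eq_zero.mp hpN] at hNj; omega, ?_, ?_⟩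
    · rintro (_ | i) hi
      · exact ⟨hval, by rw [Function.iterate_zero_apply, hNj, hRv0]⟩
      · rw [Function.iterate_succ_apply, hSN]
        exact hsteps i (by omega)
    · rwa [Function.iterate_succ_apply, hSN]

end Syracuse

theorem stmt14_general (p q : ℕ) (hp : 2 ≤ p) (hpq : Nat.Coprime p q)
    (r : ℕ → ℤ) (hr1 : ∀ j, 1 ≤ j → j < p → 1 ≤ q * j + r j)
    (hr2 : ∀ j, 1 ≤ j → j < p → (p : ℤ) ∣ q * j + r j)
    (S : ℕ → ℕ)
    (hS : ∀ N, S N = ((q * N : ℤ) + r (N % p)).toNat /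
      p ^ (padicValNat p ((q * N : ℤ) + r (N % p)).toNat))
    (a : ℕ → ℕ → ℕ)
    (ha : ∀ i N, a i N = padicValNat p ((q * S^[i] N : ℤ) + r (S^[i] N % p)).toNat)
    (k : ℕ) (av : ℕ → ℕ) (hav : ∀ i < k, 1 ≤ av i)
    (Rv : ℕ → ℤ) (hRv : ∀ i < k, ∃ j, 1 ≤ j ∧ j < p ∧ Rv i = r j)
    (M : ℕ) (hMp : ¬ p ∣ M)
    (Fk : ℚ)
    (hFk : Fk = ∑ i ∈ Finset.range k,
      (q : ℚ) ^ (k - 1 - i) * (Rv i : ℚ) / (p : ℚ) ^ (∑ j ∈ Finset.Ico i k, av j))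
    (z : ℤ)
    (hz : (p : ℚ) ^ (∑ i ∈ Finset.range k, av i) * ((M : ℚ) - Fk) = (q : ℚ) ^ k * z)
    (hzpos : 0 < z) :
    ¬ p ∣ z.toNat ∧
    (∀ i < k, a i z.toNat = av i ∧ r (S^[i] z.toNat % p) = Rv i) ∧
    S^[k] z.toNat = M := by
  have hscaled := pow_sum_mul_sum_div_eq_scaledF (by omega : p ≠ 0) q av Rv k
  rw [← hFk] at hscaled
  have hzint : (p : ℤ) ^ (∑ i ∈ range k, av i) * M - scaledF p q av Rv k = (q : ℤ) ^ k * z := by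
    exact_mod_cast (by linear_combination hz + hscaled :
      (p : ℚ) ^ (∑ i ∈ range k, av i) * M - scaledF p q av Rv k = (q : ℚ) ^ k * z)
  lift z to ℕ using hzpos.le
  simp only [Int.toNat_natCast, ha]
  exact syracuse_iterate_of_scaledF hp hpq hr1 hr2 hS hMp k av Rv z hav hRv hzint

/-- Converse to the iteration formula: if `M ≡ F_k(a,R) (mod q^k)` (after clearing
`p`-powers) then `N = p^{|a|}(M − F_k(a,R))/q^k`, if positive, is not divisible by `p`
and satisfies `a^{(k)}(N) = a`, `R^{(k)}(N) = R`, `S^k(N) = M`. -/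
theorem stmt14 (p q : ℕ) (hp : 2 ≤ p) (hq : 2 ≤ q) (hpq : Nat.Coprime p q)
    (r : ℕ → ℤ) (hr1 : ∀ j, 1 ≤ j → j < p → 1 ≤ q * j + r j)
    (hr2 : ∀ j, 1 ≤ j → j < p → (p : ℤ) ∣ q * j + r j)
    (S : ℕ → ℕ)
    (hS : ∀ N, S N = ((q * N : ℤ) + r (N % p)).toNat /
      p ^ (padicValNat p ((q * N : ℤ) + r (N % p)).toNat))
    (a : ℕ → ℕ → ℕ)
    (ha : ∀ i N, a i N = padicValNat p ((q * S^[i] N : ℤ) + r (S^[i] N % p)).toNat)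
    (k : ℕ) (av : ℕ → ℕ) (hav : ∀ i < k, 1 ≤ av i)
    (Rv : ℕ → ℤ) (hRv : ∀ i < k, ∃ j, 1 ≤ j ∧ j < p ∧ Rv i = r j)
    (M : ℕ) (hM : 1 ≤ M) (hMp : ¬ p ∣ M)
    (Fk : ℚ)
    (hFk : Fk = ∑ i ∈ Finset.range k,
      (q : ℚ) ^ (k - 1 - i) * (Rv i : ℚ) / (p : ℚ) ^ (∑ j ∈ Finset.Ico i k, av j))
    (z : ℤ)
    (hz : (p : ℚ) ^ (∑ i ∈ Finset.range k, av i) * ((M : ℚ) - Fk) = (q : ℚ) ^ k * z)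
    (hzpos : 0 < z) :
    ¬ p ∣ z.toNat ∧
    (∀ i < k, a i z.toNat = av i ∧ r (S^[i] z.toNat % p) = Rv i) ∧
    S^[k] z.toNat = M :=
  stmt14_general p q hp hpq r hr1 hr2 S hS a ha k av hav Rv hRv M hMp Fk hFk z hz hzpos
end

section
/- Let X = (J, L) be a random variable with values in ℕ² such that P(|X| > t) ≤ K e^{−ct} for all t > 0 (|·| the ℓ¹ norm), and let X₁, X₂, ... be i.i.d. copies, with partial sums X_{1,k} = X₁ + ... + X_k = (J_{1,k}, L_{1,k}). For s ∈ ℕ let K_s = min{k : L_{1,k} > s}. Then P(L_{1,K_s} = l) ≲ 𝟙_{l > s} e^{−c'(l−s)} for some constant c' > 0: the overshoot of the second coordinate over level s has exponential tail. -/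
/-!
The first passage over `s` happens at a step `j ≤ s` from `S_j = L_{1,j} = m ≤ s`,
so the overshoot equals `l` only if `S_j = m` and `L_{j+1} = l - m` for some `j, m ≤ s`. By
independence this has probability at most `∑_m (∑_j P(S_j = m)) P(L = l - m)`. The partial sums
are strictly increasing, so each level `m` is hit at most once and the inner sum is at most `1`.
Hence the probability is at most `P(L ≥ l - s) ≤ P(|X| > l - s)`, which decays exponentially.
-/

open MeasureTheory ProbabilityTheory Finset

/-- The index `K_s` of the paper. -/
noncomputable def firstPassage (f : ℕ → ℕ) (s : ℕ) : ℕ :=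
  sInf {k | s < ∑ i ∈ range k, f i}

section PartialSums

variable {f : ℕ → ℕ}

lemma le_sum_range_of_one_le (hf : ∀ i, 1 ≤ f i) (k : ℕ) : k ≤ ∑ i ∈ range k, f i := by
  simpa using card_nsmul_le_sum (range k) f 1 fun i _ => hf i

lemma strictMono_sum_range_of_one_le (hf : ∀ i, 1 ≤ f i) :
    StrictMono fun k => ∑ i ∈ range k, f i :=
  strictMono_nat_of_lt_succ fun k => by
    rw [sum_range_succ]
    have := hf k
    omega

lemma lt_sum_range_firstPassage (hf : ∀ i, 1 ≤ f i) (s : ℕ) :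
    s < ∑ i ∈ range (firstPassage f s), f i :=
  Nat.sInf_mem (s := {k | s < ∑ i ∈ range k, f i})
    ⟨s + 1, (Nat.lt_succ_self s).trans_le (le_sum_range_of_one_le hf _)⟩

lemma exists_sum_range_firstPassage_eq (hf : ∀ i, 1 ≤ f i) (s : ℕ) :
    ∃ j ≤ s, ∑ i ∈ range j, f i ≤ s ∧
      ∑ i ∈ range (firstPassage f s), f i = ∑ i ∈ range j, f i + f j := by
  have hlt := lt_sum_range_firstPassage hf s
  obtain ⟨j, hj⟩ : ∃ j, firstPassage f s = j + 1 :=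
    Nat.exists_eq_succ_of_ne_zero fun h => by simp [h] at hlt
  have hjs : ∑ i ∈ range j, f i ≤ s :=
    not_lt.1 <| Nat.notMem_of_lt_sInf (s := {k | s < ∑ i ∈ range k, f i})
      (show j < firstPassage f s by omega)
  exact ⟨j, (le_sum_range_of_one_le hf j).trans hjs, hjs, by rw [hj, sum_range_succ]⟩

end PartialSums

section Renewal

variable {Ω : Type*} [MeasurableSpace Ω] {μ : Measure Ω} {Y : ℕ → Ω → ℕ}

lemma measurableSet_sum_range_eq (hY : ∀ i, Measurable (Y i)) (j m : ℕ) :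
    MeasurableSet {ω | ∑ i ∈ range j, Y i ω = m} :=
  (Finset.measurable_sum _ fun i _ => hY i) (measurableSet_singleton m)

lemma sum_measure_sum_range_eq_le_measure_univ (hY : ∀ i, Measurable (Y i))
    (hpos : ∀ i ω, 1 ≤ Y i ω) (t : Finset ℕ) (m : ℕ) :
    ∑ j ∈ t, μ {ω | ∑ i ∈ range j, Y i ω = m} ≤ μ Set.univ := by
  refine sum_measure_le_measure_univ
    (fun j _ => (measurableSet_sum_range_eq hY j m).nullMeasurableSet)
    fun j _ j' _ hjj' => Disjoint.aedisjoint <| Set.disjoint_left.2 fun ω h h' => hjj' ?_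
  exact (strictMono_sum_range_of_one_le (hpos · ω)).injective (h.trans h'.symm)

lemma measure_sum_range_eq_inter_eq (hY : ∀ i, Measurable (Y i)) (hindep : iIndepFun Y μ)
    (hident : ∀ i, IdentDistrib (Y i) (Y 0) μ μ) (j m n : ℕ) :
    μ ({ω | ∑ i ∈ range j, Y i ω = m} ∩ {ω | Y j ω = n}) =
      μ {ω | ∑ i ∈ range j, Y i ω = m} * μ {ω | Y 0 ω = n} := by
  have hjind : IndepFun (fun ω => ∑ i ∈ range j, Y i ω) (Y j) μ := by
    simpa only [← Finset.sum_apply] using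
      hindep.indepFun_finsetSum_of_notMem hY notMem_range_self
  calc μ ({ω | ∑ i ∈ range j, Y i ω = m} ∩ {ω | Y j ω = n})
      = μ {ω | ∑ i ∈ range j, Y i ω = m} * μ (Y j ⁻¹' {n}) :=
        hjind.measure_inter_preimage_eq_mul _ _ (measurableSet_singleton m)
          (measurableSet_singleton n)
    _ = μ {ω | ∑ i ∈ range j, Y i ω = m} * μ {ω | Y 0 ω = n} := by
        rw [(hident j).measure_mem_eq (measurableSet_singleton n)]; rfl

lemma measure_sum_range_firstPassage_eq_le [IsProbabilityMeasure μ] (hY : ∀ i, Measurable (Y i))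
    (hindep : iIndepFun Y μ) (hident : ∀ i, IdentDistrib (Y i) (Y 0) μ μ)
    (hpos : ∀ i ω, 1 ≤ Y i ω) {s l : ℕ} (hsl : s < l) :
    μ {ω | ∑ i ∈ range (firstPassage (Y · ω) s), Y i ω = l} ≤
      μ {ω | l - s ≤ Y 0 ω} := by
  have hsub : {ω | ∑ i ∈ range (firstPassage (Y · ω) s), Y i ω = l} ⊆
      ⋃ m ∈ range (s + 1), ⋃ j ∈ range (s + 1),
        {ω | ∑ i ∈ range j, Y i ω = m} ∩ {ω | Y j ω = l - m} := by
    intro ω hω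
    obtain ⟨j, hjs, hSj, hT⟩ := exists_sum_range_firstPassage_eq (hpos · ω) s
    simp only [Set.mem_ofPred_eq] at hω
    simp only [Set.mem_iUnion, mem_range]
    refine ⟨_, Nat.lt_succ_of_le hSj, j, Nat.lt_succ_of_le hjs, rfl, ?_⟩
    simp only [Set.mem_ofPred_eq]
    omega
  have hdisj : (range (s + 1) : Set ℕ).PairwiseDisjoint fun m => {ω | Y 0 ω = l - m} :=
    fun m hm m' hm' hmm' => Set.disjoint_left.2 fun ω h h' => hmm' <| by
      simp only [coe_range, Set.mem_Iio, Set.mem_ofPred_eq] at hm hm' h h'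
      omega
  calc μ {ω | ∑ i ∈ range (firstPassage (Y · ω) s), Y i ω = l}
      ≤ ∑ m ∈ range (s + 1), ∑ j ∈ range (s + 1),
          μ ({ω | ∑ i ∈ range j, Y i ω = m} ∩ {ω | Y j ω = l - m}) :=
        (measure_mono hsub).trans <| (measure_biUnion_finset_le _ _).trans <|
          sum_le_sum fun m _ => measure_biUnion_finset_le _ _
    _ = ∑ m ∈ range (s + 1),
          (∑ j ∈ range (s + 1), μ {ω | ∑ i ∈ range j, Y i ω = m}) *
            μ {ω | Y 0 ω = l - m} := by
        simp_rw [measure_sum_range_eq_inter_eq hY hindep hident, sum_mul]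
    _ ≤ ∑ m ∈ range (s + 1), μ {ω | Y 0 ω = l - m} :=
        sum_le_sum fun m _ => mul_le_of_le_one_left zero_le
          ((sum_measure_sum_range_eq_le_measure_univ hY hpos _ m).trans_eq measure_univ)
    _ = μ (⋃ m ∈ range (s + 1), {ω | Y 0 ω = l - m}) :=
        (measure_biUnion_finset hdisj fun m _ => hY 0 (measurableSet_singleton _)).symm
    _ ≤ μ {ω | l - s ≤ Y 0 ω} :=
        measure_mono <| Set.iUnion₂_subset fun m hm ω hω => by
          simp only [mem_range, Set.mem_ofPred_eq] at hm hω ⊢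
          omega

end Renewal

/-- Exponential tail of the overshoot of the first passage over level `s` for a
2D renewal process with exponentially tailed increments. -/
theorem stmt18 {Ω : Type*} [MeasurableSpace Ω] (μ : Measure Ω) [IsProbabilityMeasure μ]
    (X : ℕ → Ω → ℕ × ℕ) (hmeas : ∀ i, Measurable (X i))
    (hident : ∀ i, IdentDistrib (X i) (X 0) μ μ)
    (hindep : iIndepFun X μ)
    (hpos : ∀ i ω, 1 ≤ (X i ω).1 ∧ 1 ≤ (X i ω).2)
    (K c : ℝ) (hK : 0 < K) (hc : 0 < c)
    (htail : ∀ t : ℝ, 0 < t →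
      μ {ω | t < ((X 0 ω).1 : ℝ) + ((X 0 ω).2 : ℝ)} ≤ ENNReal.ofReal (K * Real.exp (-c * t))) :
    ∃ c' > (0 : ℝ), ∃ C > (0 : ℝ), ∀ s l : ℕ,
      μ {ω | (∑ i ∈ Finset.range
          (sInf {k : ℕ | s < ∑ i ∈ Finset.range k, (X i ω).2}), (X i ω).2) = l}
        ≤ ENNReal.ofReal
            (if s < l then C * Real.exp (-c' * ((l : ℝ) - (s : ℝ))) else 0) := by
  refine ⟨c, hc, K, hK, fun s l => ?_⟩
  have hYpos i ω : 1 ≤ (X i ω).2 := (hpos i ω).2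
  split_ifs with hsl
  · have hls : (0 : ℝ) < l - s := sub_pos.2 (by exact_mod_cast hsl)
    calc _ ≤ μ {ω | l - s ≤ (X 0 ω).2} :=
          measure_sum_range_firstPassage_eq_le (fun i => (hmeas i).snd)
            (hindep.comp (fun _ => Prod.snd) fun _ => measurable_snd)
            (fun i => (hident i).comp measurable_snd) hYpos hsl
      _ ≤ μ {ω | ((l : ℝ) - s) < ((X 0 ω).1 : ℝ) + ((X 0 ω).2 : ℝ)} :=
        measure_mono fun ω hω => by
          have h1 : (1 : ℝ) ≤ (X 0 ω).1 := by exact_mod_cast (hpos 0 ω).1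
          have h2 : ((l - s : ℕ) : ℝ) ≤ (X 0 ω).2 := by exact_mod_cast hω
          rw [Nat.cast_sub hsl.le] at h2
          simp only [Set.mem_ofPred_eq]
          linarith
      _ ≤ _ := htail _ hls
  · have hempty :
        {ω | ∑ i ∈ range (firstPassage (fun i => (X i ω).2) s), (X i ω).2 = l} = ∅ :=
      Set.eq_empty_of_forall_notMem fun ω hω => by
        have := lt_sum_range_firstPassage (hYpos · ω) s
        simp only [Set.mem_ofPred_eq] at hω
        omega
    change μ {ω | ∑ i ∈ range (firstPassage (fun i => (X i ω).2) s), (X i ω).2 = l} ≤ _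
    rw [hempty, measure_empty]
    exact zero_le
end
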